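/- arXiv:1906.06323 — 4 statements merged into one kernel-verified Lean document; each statement's English description precedes it below -/
import Mathlib

section
/- Let T be a finite tree (a connected acyclic simple graph) and let uv be an edge of T. Then th₊(T/uv) ≤ th₊(T), where T/uv is the tree obtained from T by contracting the edge uv (identifying u and v and deleting the resulting loop and multiple edges). Consequently, PSD-throttling is monotone under taking connected minors of trees. -/
open SimpleGraph

/-!
In a forest every blue vertex forces all of its white neighbours at once: two white neighbours
of a blue vertex `b` lying in one white component would close a cycle through `b`. So PSD
propagation in a forest is closed-neighbourhood growth. Contracting `uv` in a tree gives a tree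
(fibres of the contraction map are connected, so cycles lift), and the contraction map sends
closed neighbourhoods into closed neighbourhoods. Hence the image of an optimal PSD-forcing set
of `T` is no larger and forces `T/uv` in no more time.
-/

/-- `v` PSD-forces `w` given blue set `B`: `v` is blue, adjacent to the white vertex `w`,
and `w` is the only white neighbor of `v` in the component of `G - B` containing `w`. -/
def psdForces {V : Type*} (G : SimpleGraph V) (B : Set V) (v w : V) : Prop :=
  v ∈ B ∧ G.Adj v w ∧ ∃ hw : w ∉ B,
    ∀ (u : V) (hu : u ∉ B), G.Adj v u →
      (G.induce {x | x ∉ B}).Reachable ⟨u, hu⟩ ⟨w, hw⟩ → u = w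

/-- One time-step of PSD forcing: all forceable white vertices become blue simultaneously. -/
def psdStep {V : Type*} (G : SimpleGraph V) (B : Set V) : Set V :=
  B ∪ {w | ∃ v, psdForces G B v w}

/-- `B` is a PSD-forcing set of `G` if iterating the PSD color change rule colors all of `V`. -/
def IsPSDForcing {V : Type*} (G : SimpleGraph V) (B : Set V) : Prop :=
  ∃ t, (psdStep G)^[t] B = Set.univ

/-- The PSD-propagation time of `B` in `G`. -/
noncomputable def psdPt {V : Type*} (G : SimpleGraph V) (B : Set V) : ℕ :=
  sInf {t | (psdStep G)^[t] B = Set.univ}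

/-- The PSD-throttling number of `G`. -/
noncomputable def psdTh {V : Type*} (G : SimpleGraph V) : ℕ :=
  sInf {k | ∃ B : Finset V, IsPSDForcing G ↑B ∧ k = B.card + psdPt G ↑B}

/-- The weighted PSD-throttling number of `(G, w)`. -/
noncomputable def psdThW {V : Type*} (G : SimpleGraph V) (w : V → ℕ) : ℕ :=
  sInf {k | ∃ B : Finset V, IsPSDForcing G ↑B ∧ k = (∑ x ∈ B, w x) + psdPt G ↑B}

/-- The spider `S(l₀, …, l_{k-1})`: a center vertex `none` adjacent to the first vertex
of each of `k` disjoint paths, the `i`-th of order `l i`. -/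
def spider (k : ℕ) (l : Fin k → ℕ) : SimpleGraph (Option ((i : Fin k) × Fin (l i))) :=
  SimpleGraph.fromRel (fun x y =>
    (∃ (i : Fin k) (j : Fin (l i)), (j : ℕ) = 0 ∧ x = none ∧ y = some ⟨i, j⟩) ∨
    (∃ (i : Fin k) (j j' : Fin (l i)), (j' : ℕ) = (j : ℕ) + 1 ∧
      x = some ⟨i, j⟩ ∧ y = some ⟨i, j'⟩))

/-- The balanced spider `T_{α,β}` with `α` legs each of order `β`. -/
abbrev balancedSpider (α β : ℕ) : SimpleGraph (Option ((_ : Fin α) × Fin β)) :=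
  spider α (fun _ => β)


/-- The graph obtained from `G` by contracting the edge `uv`: the vertex `v` is removed
and `u` becomes adjacent to all former neighbors of `v` (loops and multi-edges deleted). -/
def contractEdge {V : Type*} (G : SimpleGraph V) (u v : V) : SimpleGraph {x : V // x ≠ v} :=
  SimpleGraph.fromRel (fun x y =>
    G.Adj ↑x ↑y ∨ ((x : V) = u ∧ G.Adj v ↑y) ∨ ((y : V) = u ∧ G.Adj v ↑x))

namespace SimpleGraph

variable {V W : Type*}

def closedNbhd (G : SimpleGraph V) (X : Set V) : Set V :=
  X ∪ {w | ∃ b ∈ X, G.Adj b w}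

theorem closedNbhd_mono (G : SimpleGraph V) {X Y : Set V} (h : X ⊆ Y) :
    G.closedNbhd X ⊆ G.closedNbhd Y := by
  rintro w (hw | ⟨b, hb, hbw⟩)
  · exact Or.inl (h hw)
  · exact Or.inr ⟨b, h hb, hbw⟩

variable {G : SimpleGraph V}

theorem Reachable.exists_walk_of_induce {S : Set V} {a b : S}
    (h : (G.induce S).Reachable a b) : ∃ p : G.Walk a b, ∀ z ∈ p.support, z ∈ S := by
  obtain ⟨q⟩ := h
  refine ⟨q.map (Embedding.induce S).toHom, fun z hz => ?_⟩
  obtain ⟨z', -, rfl⟩ := List.mem_map.mp ((Walk.support_map _ q) ▸ hz)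
  exact z'.2

theorem psdStep_subset_closedNbhd (X : Set V) : psdStep G X ⊆ G.closedNbhd X := by
  rintro w (hw | ⟨b, hb, hbw, -⟩)
  · exact Or.inl hw
  · exact Or.inr ⟨b, hb, hbw⟩

theorem IsAcyclic.eq_of_adj_of_walk_avoiding (hG : G.IsAcyclic) {S : Set V}
    (hS : (G.induce S).Preconnected) {x y s t : V} (hs : s ∈ S) (ht : t ∈ S)
    (hxs : G.Adj x s) (hty : G.Adj t y) (q : G.Walk x y) (hq : ∀ z ∈ q.support, z ∉ S) :
    x = y := by
  classical
  by_contra hxy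
  obtain ⟨p, hpS⟩ := (hS ⟨s, hs⟩ ⟨t, ht⟩).exists_walk_of_induce
  have hx : x ∉ S := hq x q.start_mem_support
  have hy : y ∉ S := hq y q.end_mem_support
  have hrS : ∀ z ∈ p.toPath.1.support, z ∈ S :=
    fun z hz => hpS z (p.support_toPath_subset_support hz)
  -- `x, s, …, t, y` and `q` are two `x`–`y` paths that differ in their second vertex.
  have hpath : (Walk.cons hxs (p.toPath.1.concat hty)).IsPath := by
    refine (p.toPath.2.concat (fun h => hy (hrS y h)) hty).cons ?_
    simpa [Walk.support_concat, hxy] using fun h => hx (hrS x h)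
  have hstep : q.toPath.1.getVert 1 = s := by
    rw [← congrArg Subtype.val ((hG.subsingleton_path _ _).elim ⟨_, hpath⟩ q.toPath)]
    simp
  exact hq s (q.support_toPath_subset_support (hstep ▸ Walk.getVert_mem_support _ 1)) hs

theorem isAcyclic_iff_forall_adj_adj_walk : G.IsAcyclic ↔
    ∀ ⦃b x y⦄, G.Adj b x → G.Adj b y → ∀ q : G.Walk x y, b ∉ q.support → x = y := by
  refine ⟨fun hG b x y hbx hby q hq => ?_, fun h => ?_⟩
  · exact hG.eq_of_adj_of_walk_avoiding (S := {b}) (by simp)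
      rfl rfl hbx.symm hby q (fun z hz hzb => hq (hzb ▸ hz))
  · rintro b (_ | ⟨hbx, p⟩) hc
    · exact Walk.not_isCycle_nil hc
    · have hp := ((Walk.cons_isCycle_iff p hbx).mp hc).1
      obtain ⟨y, hby, q, hpq⟩ := p.reverse.exists_eq_cons_of_ne hbx.ne
      have hqp := hp.reverse
      rw [hpq, Walk.cons_isPath_iff] at hqp
      obtain rfl := h hbx hby q.reverse (by simpa using hqp.2)
      -- now the cycle is `b, x, b`, too short to be a cycle
      have hlen := hc.three_le_length
      rw [(Walk.isPath_iff_nil.mp hqp.1).eq_nil] at hpq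
      rw [Walk.length_cons, ← Walk.length_reverse, hpq] at hlen
      simp at hlen

theorem IsAcyclic.closedNbhd_subset_psdStep (hG : G.IsAcyclic) (X : Set V) :
    G.closedNbhd X ⊆ psdStep G X := by
  rintro w (hw | ⟨b, hb, hbw⟩)
  · exact Or.inl hw
  by_cases hwX : w ∈ X
  · exact Or.inl hwX
  refine Or.inr ⟨b, hb, hbw, hwX, fun x hx hbx hreach => ?_⟩
  obtain ⟨q, hq⟩ := hreach.exists_walk_of_induce
  exact isAcyclic_iff_forall_adj_adj_walk.mp hG hbx hbw q fun hb' => hq b hb' hb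

theorem IsAcyclic.psdStep_eq (hG : G.IsAcyclic) : psdStep G = G.closedNbhd :=
  funext fun X => (psdStep_subset_closedNbhd X).antisymm (hG.closedNbhd_subset_psdStep X)

section Lift

variable {G' : SimpleGraph W} {f : V → W}

theorem Walk.exists_lift (hfib : ∀ w, (G.induce (f ⁻¹' {w})).Preconnected)
    (hlift : ∀ ⦃x y⦄, G'.Adj x y → ∃ a b, f a = x ∧ f b = y ∧ G.Adj a b)
    {x y : W} (q : G'.Walk x y) {a b : V} (ha : f a = x) (hb : f b = y) :
    ∃ p : G.Walk a b, ∀ z ∈ p.support, f z ∈ q.support := by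
  induction q generalizing a with
  | nil =>
    obtain ⟨p, hp⟩ := (hfib _ ⟨a, ha⟩ ⟨b, hb⟩).exists_walk_of_induce
    exact ⟨p, fun z hz => by simpa using hp z hz⟩
  | cons hxy q ih =>
    obtain ⟨a', b', ha', hb', hab⟩ := hlift hxy
    obtain ⟨p₁, hp₁⟩ := (hfib _ ⟨a, ha⟩ ⟨a', ha'⟩).exists_walk_of_induce
    obtain ⟨p₂, hp₂⟩ := ih hb' hb
    refine ⟨p₁.append (.cons hab p₂), fun z hz => ?_⟩
    rw [Walk.mem_support_append_iff, Walk.support_cons, List.mem_cons] at hz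
    rw [Walk.support_cons, List.mem_cons]
    rcases hz with hz | rfl | hz
    · exact Or.inl (hp₁ z hz)
    · exact Or.inl ha'
    · exact Or.inr (hp₂ z hz)

theorem IsAcyclic.of_lift_of_preconnected_fiber (hG : G.IsAcyclic)
    (hfib : ∀ w, (G.induce (f ⁻¹' {w})).Preconnected)
    (hlift : ∀ ⦃x y⦄, G'.Adj x y → ∃ a b, f a = x ∧ f b = y ∧ G.Adj a b) : G'.IsAcyclic := by
  refine isAcyclic_iff_forall_adj_adj_walk.mpr fun b x y hbx hby q hb => ?_
  obtain ⟨s, x₁, hs, rfl, hsx⟩ := hlift hbx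
  obtain ⟨t, y₁, ht, rfl, hty⟩ := hlift hby
  obtain ⟨p, hp⟩ := q.exists_lift hfib hlift rfl rfl
  exact congrArg f <| hG.eq_of_adj_of_walk_avoiding (hfib b) hs ht hsx.symm hty p
    fun z hz hzb => hb (hzb ▸ hp z hz)

theorem image_closedNbhd_subset (hf : ∀ ⦃a b⦄, G.Adj a b → f a ≠ f b → G'.Adj (f a) (f b))
    (X : Set V) : f '' G.closedNbhd X ⊆ G'.closedNbhd (f '' X) := by
  rintro _ ⟨z, hz | ⟨b, hb, hbz⟩, rfl⟩
  · exact Or.inl ⟨z, hz, rfl⟩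
  by_cases he : f b = f z
  · exact Or.inl ⟨b, hb, he⟩
  · exact Or.inr ⟨f b, ⟨b, hb, rfl⟩, hf hbz he⟩

end Lift

end SimpleGraph

section Throttling

variable {V W : Type*} {G : SimpleGraph V} {G' : SimpleGraph W}

theorem image_iterate_psdStep_subset (hG' : G'.IsAcyclic) {f : V → W}
    (hf : ∀ ⦃a b⦄, G.Adj a b → f a ≠ f b → G'.Adj (f a) (f b)) (X : Set V) (t : ℕ) :
    f '' (psdStep G)^[t] X ⊆ (psdStep G')^[t] (f '' X) := by
  induction t with
  | zero => exact subset_rfl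
  | succ t ih =>
    rw [Function.iterate_succ_apply', Function.iterate_succ_apply']
    calc f '' psdStep G _ ⊆ f '' G.closedNbhd _ := Set.image_mono (psdStep_subset_closedNbhd _)
      _ ⊆ G'.closedNbhd (f '' _) := image_closedNbhd_subset hf _
      _ ⊆ G'.closedNbhd _ := G'.closedNbhd_mono ih
      _ = psdStep G' _ := (congrFun hG'.psdStep_eq _).symm

theorem psdPt_le {B : Set V} {t : ℕ} (h : (psdStep G)^[t] B = Set.univ) : psdPt G B ≤ t :=
  Nat.sInf_le h

theorem IsPSDForcing.iterate_psdPt {B : Set V} (hB : IsPSDForcing G B) :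
    (psdStep G)^[psdPt G B] B = Set.univ :=
  Nat.sInf_mem hB

theorem psdTh_le {B : Finset V} (hB : IsPSDForcing G B) : psdTh G ≤ B.card + psdPt G B :=
  Nat.sInf_le ⟨B, hB, rfl⟩

theorem exists_psdTh_eq [Fintype V] (G : SimpleGraph V) :
    ∃ B : Finset V, IsPSDForcing G B ∧ psdTh G = B.card + psdPt G B :=
  Nat.sInf_mem (s := {k | ∃ B : Finset V, IsPSDForcing G B ∧ k = B.card + psdPt G B})
    ⟨_, Finset.univ, ⟨0, by simp⟩, rfl⟩

theorem psdTh_le_of_surjective [Fintype V] (hG' : G'.IsAcyclic) {f : V → W}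
    (hsurj : Function.Surjective f)
    (hf : ∀ ⦃a b⦄, G.Adj a b → f a ≠ f b → G'.Adj (f a) (f b)) : psdTh G' ≤ psdTh G := by
  classical
  obtain ⟨B, hB, hth⟩ := exists_psdTh_eq G
  have hcover : (psdStep G')^[psdPt G B] ↑(B.image f) = Set.univ := by
    refine Set.eq_univ_of_univ_subset ?_
    calc Set.univ = f '' (psdStep G)^[psdPt G B] B := by
          rw [hB.iterate_psdPt, Set.image_univ_of_surjective hsurj]
      _ ⊆ _ := by simpa using image_iterate_psdStep_subset hG' hf _ _
  calc psdTh G' ≤ (B.image f).card + psdPt G' (B.image f) :=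
        psdTh_le (G := G') (B := B.image f) ⟨_, hcover⟩
    _ ≤ B.card + psdPt G B := add_le_add Finset.card_image_le (psdPt_le hcover)
    _ = psdTh G := hth.symm

end Throttling

section ContractEdge

variable {V : Type*} {T : SimpleGraph V} {u v : V}

theorem contractEdge_adj_iff {x y : {x : V // x ≠ v}} :
    (contractEdge T u v).Adj x y ↔
      x ≠ y ∧ (T.Adj x y ∨ ((x : V) = u ∧ T.Adj v y) ∨ ((y : V) = u ∧ T.Adj v x)) := by
  rw [contractEdge, fromRel_adj, adj_comm T y x]
  tauto

variable [DecidableEq V]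

def contractProj (hne : u ≠ v) (x : V) : {x : V // x ≠ v} :=
  if h : x = v then ⟨u, hne⟩ else ⟨x, h⟩

theorem contractProj_of_ne (hne : u ≠ v) {x : V} (h : x ≠ v) : contractProj hne x = ⟨x, h⟩ :=
  dif_neg h

theorem contractProj_self (hne : u ≠ v) : contractProj hne v = ⟨u, hne⟩ :=
  dif_pos rfl

theorem contractProj_surjective (hne : u ≠ v) : Function.Surjective (contractProj hne) :=
  fun x => ⟨x, contractProj_of_ne hne x.2⟩

theorem contractEdge_adj_contractProj (huv : T.Adj u v) {a b : V} (hab : T.Adj a b)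
    (hne : contractProj huv.ne a ≠ contractProj huv.ne b) :
    (contractEdge T u v).Adj (contractProj huv.ne a) (contractProj huv.ne b) := by
  refine contractEdge_adj_iff.mpr ⟨hne, ?_⟩
  by_cases ha : a = v <;> by_cases hb : b = v
  · exact absurd (ha.trans hb.symm) hab.ne
  · subst ha
    simp [contractProj_self, contractProj_of_ne _ hb, hab]
  · subst hb
    simp [contractProj_self, contractProj_of_ne _ ha, hab.symm]
  · simp [contractProj_of_ne _ ha, contractProj_of_ne _ hb, hab]

theorem exists_adj_of_contractEdge_adj (huv : T.Adj u v) ⦃x y : {x : V // x ≠ v}⦄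
    (h : (contractEdge T u v).Adj x y) :
    ∃ a b, contractProj huv.ne a = x ∧ contractProj huv.ne b = y ∧ T.Adj a b := by
  obtain ⟨-, hxy | ⟨hxu, hvy⟩ | ⟨hyu, hvx⟩⟩ := contractEdge_adj_iff.mp h
  · exact ⟨x, y, contractProj_of_ne _ x.2, contractProj_of_ne _ y.2, hxy⟩
  · exact ⟨v, y, by rw [contractProj_self]; ext; exact hxu.symm, contractProj_of_ne _ y.2, hvy⟩
  · exact ⟨x, v, contractProj_of_ne _ x.2, by rw [contractProj_self]; ext; exact hyu.symm,
      hvx.symm⟩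

theorem eq_or_adj_of_contractProj_eq (huv : T.Adj u v) {a b : V}
    (h : contractProj huv.ne a = contractProj huv.ne b) : a = b ∨ T.Adj a b := by
  by_cases ha : a = v <;> by_cases hb : b = v
  · exact Or.inl (ha.trans hb.symm)
  · subst ha
    rw [contractProj_self, contractProj_of_ne _ hb, Subtype.mk.injEq] at h
    exact Or.inr (h ▸ huv.symm)
  · subst hb
    rw [contractProj_self, contractProj_of_ne _ ha, Subtype.mk.injEq] at h
    exact Or.inr (h ▸ huv)
  · rw [contractProj_of_ne _ ha, contractProj_of_ne _ hb, Subtype.mk.injEq] at h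
    exact Or.inl h

theorem preconnected_induce_contractProj_preimage (huv : T.Adj u v) (x : {x : V // x ≠ v}) :
    (T.induce (contractProj huv.ne ⁻¹' {x})).Preconnected := by
  rintro ⟨a, ha⟩ ⟨b, hb⟩
  rcases eq_or_adj_of_contractProj_eq huv (ha.trans hb.symm) with rfl | hab
  · rfl
  · exact Adj.reachable (by simpa using hab)

theorem isAcyclic_contractEdge (hT : T.IsAcyclic) (huv : T.Adj u v) :
    (contractEdge T u v).IsAcyclic :=
  hT.of_lift_of_preconnected_fiber (preconnected_induce_contractProj_preimage huv)
    (exists_adj_of_contractEdge_adj huv)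

end ContractEdge

/-- If `T` is a finite tree and `uv ∈ E(T)`, then `th₊(T/uv) ≤ th₊(T)`:
PSD-throttling is monotone under edge contraction (hence under connected minors) of trees. -/
theorem stmt2 {V : Type*} [Fintype V] [DecidableEq V] (T : SimpleGraph V) (hT : T.IsTree)
    (u v : V) (huv : T.Adj u v) :
    psdTh (contractEdge T u v) ≤ psdTh T :=
  psdTh_le_of_surjective (isAcyclic_contractEdge hT.isAcyclic huv)
    (contractProj_surjective huv.ne) fun _ _ => contractEdge_adj_contractProj huv
end

section
/- Let (T,w) be a finite tree with positive integer vertex weights, let v ∈ V(T) with w(v) = 1, and let T₁,…,Tₘ be pairwise symmetric branches of T at v, with symmetry maps σᵢ carrying V(T₁) onto V(Tᵢ) for i = 2,…,m. Then there exists an optimal set B for (T,w) (i.e., a PSD-forcing set with w(B) + pt₊(T;B) = th₊(T,w)) that is symmetric, meaning B ∩ V(Tᵢ) = σᵢ(B ∩ V(T₁)) for all i = 2,…,m. -/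
/-!
On a tree, PSD forcing from `B` colours at time `t` exactly the vertices within distance `t`
of `B`, so `psdPt T B` is the covering radius of `B`. Start from an optimal set `B` of radius
`p` and replace its trace on every branch `Cᵢ` by the mirror image of its trace on one branch
`Cⱼ`. The radius stays at most `p` as long as every blue vertex of another branch has a blue
stand-in, outside any prescribed branch, that is no farther from `v`. If `v ∈ B` or the
branch weights of `B` differ, take `j` of least weight and add `v`, which serves as the
stand-in; since `w v = 1` the weight does not grow. Otherwise take `j` to be the branch
holding the blue branch vertex nearest to `v`: its mirror images are the stand-ins, and the
weight is unchanged.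
-/

open SimpleGraph

/-- `C` is a branch of `T` at `v`, i.e. the vertex set of a connected component of `T - v`. -/
def IsBranch {V : Type*} (T : SimpleGraph V) (v : V) (C : Set V) : Prop :=
  ∃ K : (T.induce {x | x ≠ v}).ConnectedComponent, C = Subtype.val '' K.supp

/-- `σ` is a symmetry map between the branches `C` and `D` of the weighted tree `(T, w)`:
an automorphism of `T` fixing every vertex outside `C ∪ D`, exchanging `C` and `D`,
and preserving the weights. -/
def IsSymmetryMap {V : Type*} (T : SimpleGraph V) (w : V → ℕ) (C D : Set V)
    (σ : T ≃g T) : Prop :=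
  (∀ x : V, x ∉ C ∪ D → σ x = x) ∧ ⇑σ '' C = D ∧ ⇑σ '' D = C ∧ ∀ x ∈ C, w (σ x) = w x

open Finset

namespace SimpleGraph

variable {V W : Type*} {G : SimpleGraph V} {G' : SimpleGraph W}

lemma Iso.dist_apply (φ : G ≃g G') (x y : V) : G'.dist (φ x) (φ y) = G.dist x y := by
  rw [dist_eq_sInf, dist_eq_sInf]
  congr 1
  ext n
  constructor
  · rintro ⟨p, rfl⟩
    exact ⟨(p.map φ.symm.toHom).copy (φ.symm_apply_apply x) (φ.symm_apply_apply y), by simp⟩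
  · rintro ⟨p, rfl⟩
    exact ⟨p.map φ.toHom, by simp⟩

lemma Reachable.exists_adj_dist_lt {b u : V} (h : G.Reachable b u) (hne : b ≠ u) :
    ∃ y, G.Adj y u ∧ G.dist b y < G.dist b u := by
  obtain ⟨p, hp⟩ := h.exists_walk_length_eq_dist
  obtain ⟨y, huy, q, hq⟩ := p.reverse.exists_eq_cons_of_ne hne.symm
  have hlen : p.length = q.length + 1 := by
    simpa using congrArg Walk.length hq
  refine ⟨y, huy.symm, ?_⟩
  calc G.dist b y = G.dist y b := dist_comm
    _ ≤ q.length := dist_le q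
    _ < G.dist b u := by omega

-- `s(b, u)` is a bridge, but `cons hbu' p` is a walk from `b` to `u` using it only if `u' = u`.
lemma IsAcyclic.eq_of_adj_of_adj_of_notMem_support (hG : G.IsAcyclic) {b u u' : V}
    (hbu : G.Adj b u) (hbu' : G.Adj b u') (p : G.Walk u' u) (hb : b ∉ p.support) : u' = u := by
  have hbridge := isBridge_iff_forall_walk_mem_edges.mp
    (isAcyclic_iff_forall_adj_isBridge.mp hG hbu) (Walk.cons hbu' p)
  rw [Walk.edges_cons, List.mem_cons] at hbridge
  rcases hbridge with h | h
  · exact (Sym2.congr_right.mp h).symm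
  · exact absurd (p.fst_mem_support_of_mem_edges h) hb

end SimpleGraph

section PSDOnTrees

variable {V : Type*} {T : SimpleGraph V}

def CoversWithin (T : SimpleGraph V) (B : Set V) (p : ℕ) : Prop :=
  ∀ u, ∃ b ∈ B, T.dist b u ≤ p

lemma psdStep_eq_of_isTree (hT : T.IsTree) (B : Set V) :
    psdStep T B = B ∪ {u | ∃ b ∈ B, T.Adj b u} := by
  refine subset_antisymm
    (Set.union_subset_union_right _ fun u ⟨b, hb, hbu, _⟩ => ⟨b, hb, hbu⟩) ?_
  rintro u (hu | ⟨b, hb, hbu⟩)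
  · exact Or.inl hu
  by_cases huB : u ∈ B
  · exact Or.inl huB
  refine Or.inr ⟨b, hb, hbu, huB, fun u' _ hbu' ⟨q⟩ => ?_⟩
  have hbq : b ∉ (q.map (Embedding.induce {x | x ∉ B}).toHom).support := by
    rw [Walk.support_map, List.mem_map]
    rintro ⟨⟨x, hx⟩, -, rfl⟩
    exact hx hb
  exact hT.isAcyclic.eq_of_adj_of_adj_of_notMem_support hbu hbu' _ hbq

lemma iterate_psdStep_eq_of_isTree (hT : T.IsTree) (B : Set V) (t : ℕ) :
    (psdStep T)^[t] B = {u | ∃ b ∈ B, T.dist b u ≤ t} := by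
  induction t with
  | zero =>
    ext u
    simp [hT.connected.dist_eq_zero_iff]
  | succ t ih =>
    rw [Function.iterate_succ_apply', ih, psdStep_eq_of_isTree hT]
    ext u
    simp only [Set.mem_union, Set.mem_ofPred_eq]
    constructor
    · rintro (⟨b, hb, hd⟩ | ⟨y, ⟨b, hb, hd⟩, hyu⟩)
      · exact ⟨b, hb, by omega⟩
      · have := hT.connected.dist_triangle (u := b) (v := y) (w := u)
        rw [dist_eq_one_iff_adj.mpr hyu] at this
        exact ⟨b, hb, by omega⟩
    · rintro ⟨b, hb, hd⟩
      by_cases hle : T.dist b u ≤ t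
      · exact Or.inl ⟨b, hb, hle⟩
      have hne : b ≠ u := by
        rintro rfl
        simp at hle
      obtain ⟨y, hyu, hy⟩ := (hT.connected b u).exists_adj_dist_lt hne
      exact Or.inr ⟨y, ⟨b, hb, by omega⟩, hyu⟩

lemma iterate_psdStep_eq_univ_iff (hT : T.IsTree) (B : Set V) (t : ℕ) :
    (psdStep T)^[t] B = Set.univ ↔ CoversWithin T B t := by
  rw [iterate_psdStep_eq_of_isTree hT, Set.eq_univ_iff_forall]
  rfl

lemma isPSDForcing_of_coversWithin (hT : T.IsTree) {B : Set V} {p : ℕ}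
    (h : CoversWithin T B p) : IsPSDForcing T B :=
  ⟨p, (iterate_psdStep_eq_univ_iff hT B p).mpr h⟩

lemma psdPt_le_of_coversWithin (hT : T.IsTree) {B : Set V} {p : ℕ}
    (h : CoversWithin T B p) : psdPt T B ≤ p :=
  Nat.sInf_le ((iterate_psdStep_eq_univ_iff hT B p).mpr h)

lemma coversWithin_psdPt (hT : T.IsTree) {B : Set V} (hB : IsPSDForcing T B) :
    CoversWithin T B (psdPt T B) :=
  (iterate_psdStep_eq_univ_iff hT B _).mp (Nat.sInf_mem hB)

def IsPSDOptimal (T : SimpleGraph V) (w : V → ℕ) (B : Finset V) : Prop :=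
  IsPSDForcing T B ∧ ∑ x ∈ B, w x + psdPt T B = psdThW T w

lemma exists_isPSDOptimal [Fintype V] (T : SimpleGraph V) (w : V → ℕ) :
    ∃ B, IsPSDOptimal T w B := by
  have hne : {k | ∃ B : Finset V, IsPSDForcing T ↑B ∧ k = ∑ x ∈ B, w x + psdPt T ↑B}.Nonempty :=
    ⟨_, univ, ⟨0, by simp⟩, rfl⟩
  obtain ⟨B, hB, hk⟩ := Nat.sInf_mem hne
  exact ⟨B, hB, hk.symm⟩

lemma IsPSDOptimal.of_coversWithin (hT : T.IsTree) {w : V → ℕ} {B S : Finset V}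
    (hB : IsPSDOptimal T w B) (hS : CoversWithin T S (psdPt T B))
    (hwS : ∑ x ∈ S, w x ≤ ∑ x ∈ B, w x) : IsPSDOptimal T w S := by
  have hforce := isPSDForcing_of_coversWithin hT hS
  refine ⟨hforce, le_antisymm ?_ (Nat.sInf_le ⟨S, hforce, rfl⟩)⟩
  have := psdPt_le_of_coversWithin hT hS
  have := hB.2
  omega

end PSDOnTrees

section Branches

variable {V : Type*} {T : SimpleGraph V} {v : V} {C D : Set V}

lemma IsBranch.center_notMem (hC : IsBranch T v C) : v ∉ C := by
  obtain ⟨K, rfl⟩ := hC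
  rintro ⟨x, -, hx⟩
  exact x.2 hx

lemma IsBranch.mem_of_adj (hC : IsBranch T v C) {x z : V} (hx : x ∈ C) (hxz : T.Adj x z)
    (hz : z ≠ v) : z ∈ C := by
  obtain ⟨K, rfl⟩ := hC
  obtain ⟨x, hxK, rfl⟩ := hx
  refine ⟨⟨z, hz⟩, ?_, rfl⟩
  rw [ConnectedComponent.mem_supp_iff] at hxK ⊢
  rw [← hxK]
  exact ConnectedComponent.sound (Adj.reachable hxz.symm)

lemma IsBranch.mem_of_walk (hC : IsBranch T v C) {x y : V} (p : T.Walk x y) (hx : x ∈ C)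
    (hv : v ∉ p.support) : y ∈ C := by
  induction p with
  | nil => exact hx
  | cons hxz q ih =>
    rw [Walk.support_cons, List.mem_cons, not_or] at hv
    exact ih (hC.mem_of_adj hx hxz fun h => hv.2 (h ▸ q.start_mem_support)) hv.2

lemma IsBranch.dist_eq (hT : T.Connected) (hC : IsBranch T v C) {x y : V} (hx : x ∈ C)
    (hy : y ∉ C) : T.dist x y = T.dist v x + T.dist v y := by
  classical
  rw [dist_comm (u := v) (v := x)]
  refine le_antisymm hT.dist_triangle ?_
  obtain ⟨p, hp⟩ := hT.exists_walk_length_eq_dist x y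
  have hv : v ∈ p.support := by_contra fun hv => hy (hC.mem_of_walk p hx hv)
  calc T.dist x v + T.dist v y
      ≤ (p.takeUntil v hv).length + (p.dropUntil v hv).length :=
        add_le_add (dist_le _) (dist_le _)
    _ = T.dist x y := by rw [← Walk.length_append, p.take_spec hv, hp]

lemma IsBranch.disjoint (hC : IsBranch T v C) (hD : IsBranch T v D) (hCD : C ≠ D) :
    Disjoint C D := by
  obtain ⟨K, rfl⟩ := hC
  obtain ⟨L, rfl⟩ := hD
  rw [Set.disjoint_left]
  rintro _ ⟨x, hxK, rfl⟩ ⟨y, hyL, hxy⟩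
  obtain rfl := Subtype.ext hxy
  rw [ConnectedComponent.mem_supp_iff] at hxK hyL
  exact hCD (by rw [← hxK, hyL])

end Branches

section BranchSymmetry

open Function
open scoped Classical

variable {V ι : Type*} {T : SimpleGraph V} {v : V} {C : ι → Set V} {i0 : ι}
  {τ : ι → T ≃g T}

structure IsBranchSymmetry (T : SimpleGraph V) (v : V) (C : ι → Set V) (i0 : ι)
    (τ : ι → T ≃g T) : Prop where
  isBranch : ∀ i, IsBranch T v (C i)
  pairwise_disjoint : Pairwise (Disjoint on C)
  apply_base : ∀ x, τ i0 x = x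
  apply_center : ∀ i, τ i v = v
  image_base : ∀ i, τ i '' C i0 = C i

def mirror (τ : ι → T ≃g T) (i j : ι) : T ≃g T := (τ i).symm.trans (τ j)

@[simp]
lemma mirror_apply (i j : ι) (x : V) : mirror τ i j x = τ j ((τ i).symm x) := rfl

@[simp]
lemma mirror_mirror (i j : ι) (x : V) : mirror τ j i (mirror τ i j x) = x := by
  simp

lemma mirror_self (i : ι) (x : V) : mirror τ i i x = x := by
  simp

namespace IsBranchSymmetry

lemma eq_of_mem (h : IsBranchSymmetry T v C i0 τ) {i j : ι} {x : V} (hi : x ∈ C i)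
    (hj : x ∈ C j) : i = j := by
  by_contra hij
  exact Set.disjoint_left.mp (h.pairwise_disjoint hij) hi hj

lemma apply_mem (h : IsBranchSymmetry T v C i0 τ) (i : ι) {x : V} (hx : x ∈ C i0) :
    τ i x ∈ C i :=
  h.image_base i ▸ Set.mem_image_of_mem _ hx

lemma symm_apply_mem (h : IsBranchSymmetry T v C i0 τ) {i : ι} {x : V} (hx : x ∈ C i) :
    (τ i).symm x ∈ C i0 := by
  rw [← h.image_base i] at hx
  obtain ⟨y, hy, rfl⟩ := hx
  simpa using hy

lemma mirror_mem (h : IsBranchSymmetry T v C i0 τ) {i : ι} (j : ι) {x : V} (hx : x ∈ C i) :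
    mirror τ i j x ∈ C j :=
  h.apply_mem j (h.symm_apply_mem hx)

lemma mirror_base (h : IsBranchSymmetry T v C i0 τ) (j : ι) (x : V) :
    mirror τ i0 j x = τ j x := by
  rw [mirror_apply, (τ i0).symm_apply_eq.mpr (h.apply_base x).symm]

lemma dist_center_mirror (h : IsBranchSymmetry T v C i0 τ) (i j : ι) (x : V) :
    T.dist v (mirror τ i j x) = T.dist v x := by
  have hv : mirror τ i j v = v := by
    rw [mirror_apply, (τ i).symm_apply_eq.mpr (h.apply_center i).symm, h.apply_center j]
  rw [← (mirror τ i j).dist_apply v x, hv]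

lemma weight_mirror {w : V → ℕ} (h : IsBranchSymmetry T v C i0 τ)
    (hw : ∀ i, ∀ x ∈ C i0, w (τ i x) = w x) {i : ι} (j : ι) {x : V} (hx : x ∈ C i) :
    w (mirror τ i j x) = w x := by
  have hx0 := h.symm_apply_mem hx
  rw [mirror_apply, hw j _ hx0, ← hw i _ hx0, RelIso.apply_symm_apply]

end IsBranchSymmetry

lemma sum_eq_sum_filter_add_sum_branches (hC : Pairwise (Disjoint on C)) [Fintype ι]
    (S : Finset V) (w : V → ℕ) :
    ∑ x ∈ S, w x = ∑ x ∈ S with ∀ k, x ∉ C k, w x + ∑ k, ∑ x ∈ S with x ∈ C k, w x := by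
  rw [← sum_filter_add_sum_filter_not S fun x => ∀ k, x ∉ C k, ← sum_biUnion]
  · congr 2
    ext x
    simp [not_forall]
  · intro a _ b _ hab
    rw [Function.onFun, Finset.disjoint_left]
    intro x hxa hxb
    exact Set.disjoint_left.mp (hC hab) (mem_filter.mp hxa).2 (mem_filter.mp hxb).2

lemma exists_branch_nearest_center [Nonempty ι] (T : SimpleGraph V) (v : V) (C : ι → Set V)
    (B : Finset V) :
    ∃ j, ∀ k, ∀ b ∈ B, b ∈ C k → ∃ c ∈ B, c ∈ C j ∧ T.dist v c ≤ T.dist v b := by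
  by_cases hne : (B.filter fun b => ∃ k, b ∈ C k).Nonempty
  · obtain ⟨c, hc, hmin⟩ := exists_min_image _ (T.dist v) hne
    obtain ⟨hcB, j, hcj⟩ := mem_filter.mp hc
    exact ⟨j, fun k b hb hbk => ⟨c, hcB, hcj, hmin b (mem_filter.mpr ⟨hb, k, hbk⟩)⟩⟩
  · exact ⟨Classical.arbitrary ι, fun k b hb hbk => absurd ⟨b, mem_filter.mpr ⟨hb, k, hbk⟩⟩ hne⟩

variable [Fintype V]

noncomputable def symmetrize (C : ι → Set V) (τ : ι → T ≃g T) (B : Finset V) (j : ι) :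
    Finset V :=
  {x | (x ∈ B ∧ ∀ k, x ∉ C k) ∨ ∃ i, x ∈ C i ∧ mirror τ i j x ∈ B}

lemma mem_symmetrize_of_forall_notMem {B : Finset V} {j : ι} {x : V} (hx : ∀ k, x ∉ C k) :
    x ∈ symmetrize C τ B j ↔ x ∈ B := by
  simp only [symmetrize, mem_filter, mem_univ, true_and]
  exact ⟨fun h' => h'.elim And.left fun ⟨k, hk, _⟩ => absurd hk (hx k), fun hB => Or.inl ⟨hB, hx⟩⟩

namespace IsBranchSymmetry

lemma mem_symmetrize (h : IsBranchSymmetry T v C i0 τ) {B : Finset V} {i j : ι} {x : V}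
    (hx : x ∈ C i) : x ∈ symmetrize C τ B j ↔ mirror τ i j x ∈ B := by
  simp only [symmetrize, mem_filter, mem_univ, true_and]
  constructor
  · rintro (⟨-, hout⟩ | ⟨k, hk, hkB⟩)
    · exact absurd hx (hout i)
    · rwa [h.eq_of_mem hx hk]
  · exact fun hB => Or.inr ⟨i, hx, hB⟩

lemma symmetrize_inter (h : IsBranchSymmetry T v C i0 τ) (B : Finset V) (j i : ι) :
    ↑(symmetrize C τ B j) ∩ C i = τ i '' (↑(symmetrize C τ B j) ∩ C i0) := by
  ext x
  constructor
  · rintro ⟨hxS, hxi⟩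
    refine ⟨(τ i).symm x, ⟨?_, h.symm_apply_mem hxi⟩, by simp⟩
    rw [Finset.mem_coe, h.mem_symmetrize (h.symm_apply_mem hxi), h.mirror_base]
    exact (h.mem_symmetrize hxi).mp hxS
  · rintro ⟨y, ⟨hyS, hy0⟩, rfl⟩
    refine ⟨?_, h.apply_mem i hy0⟩
    rw [Finset.mem_coe, h.mem_symmetrize (h.apply_mem i hy0)]
    simpa [h.mem_symmetrize hy0, h.mirror_base] using hyS

lemma sum_filter_symmetrize {w : V → ℕ} (h : IsBranchSymmetry T v C i0 τ)
    (hw : ∀ i, ∀ x ∈ C i0, w (τ i x) = w x) (B : Finset V) (j k : ι) :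
    ∑ x ∈ symmetrize C τ B j with x ∈ C k, w x = ∑ x ∈ B with x ∈ C j, w x := by
  refine sum_nbij' (mirror τ k j) (mirror τ j k) ?_ ?_ (fun x _ => mirror_mirror k j x)
    (fun x _ => mirror_mirror j k x) fun x hx => (h.weight_mirror hw j (mem_filter.mp hx).2).symm
  · intro x hx
    obtain ⟨hxS, hxk⟩ := mem_filter.mp hx
    exact mem_filter.mpr ⟨(h.mem_symmetrize hxk).mp hxS, h.mirror_mem j hxk⟩
  · intro x hx
    obtain ⟨hxB, hxj⟩ := mem_filter.mp hx
    refine mem_filter.mpr ⟨(h.mem_symmetrize (h.mirror_mem k hxj)).mpr ?_, h.mirror_mem k hxj⟩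
    rwa [mirror_mirror]

lemma sum_symmetrize {w : V → ℕ} [Fintype ι] (h : IsBranchSymmetry T v C i0 τ)
    (hw : ∀ i, ∀ x ∈ C i0, w (τ i x) = w x) (B : Finset V) (j : ι) :
    ∑ x ∈ symmetrize C τ B j, w x =
      ∑ x ∈ B with ∀ k, x ∉ C k, w x + Fintype.card ι * ∑ x ∈ B with x ∈ C j, w x := by
  rw [sum_eq_sum_filter_add_sum_branches h.pairwise_disjoint]
  congr 1
  · refine sum_congr ?_ fun _ _ => rfl
    ext x
    simp only [mem_filter]
    exact and_congr_left mem_symmetrize_of_forall_notMem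
  · simp [h.sum_filter_symmetrize hw]

lemma exists_dist_le_of_mem (hT : T.IsTree) (h : IsBranchSymmetry T v C i0 τ)
    {B S : Finset V} {j : ι} {p : ℕ} (hB : CoversWithin T B p)
    (hS : symmetrize C τ B j ⊆ S)
    (hfar : ∀ i, ∀ b ∈ B, b ∉ C j → ∃ s ∈ S, s ∉ C i ∧ T.dist v s ≤ T.dist v b)
    {i : ι} {u : V} (hu : u ∈ C i) : ∃ s ∈ S, T.dist s u ≤ p := by
  have hu' := h.mirror_mem j hu
  obtain ⟨b, hb, hbu⟩ := hB (mirror τ i j u)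
  by_cases hbj : b ∈ C j
  · refine ⟨mirror τ j i b, hS ((h.mem_symmetrize (h.mirror_mem i hbj)).mpr ?_), ?_⟩
    · rwa [mirror_mirror]
    · have hmir := (mirror τ i j).dist_apply (mirror τ j i b) u
      rw [mirror_mirror] at hmir
      rwa [← hmir]
  obtain ⟨s, hs, hsi, hsb⟩ := hfar i b hb hbj
  refine ⟨s, hs, ?_⟩
  calc T.dist s u = T.dist v u + T.dist v s := by
        rw [SimpleGraph.dist_comm, (h.isBranch i).dist_eq hT.connected hu hsi]
    _ ≤ T.dist v (mirror τ i j u) + T.dist v b := by rw [h.dist_center_mirror]; omega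
    _ = T.dist b (mirror τ i j u) := by
      rw [SimpleGraph.dist_comm (u := b), (h.isBranch j).dist_eq hT.connected hu' hbj, add_comm]
    _ ≤ p := hbu

lemma coversWithin_of_symmetrize_subset (hT : T.IsTree) (h : IsBranchSymmetry T v C i0 τ)
    {B S : Finset V} {j : ι} {p : ℕ} (hB : CoversWithin T B p)
    (hS : symmetrize C τ B j ⊆ S)
    (hfar : ∀ i k, k ≠ j → ∀ b ∈ B, b ∈ C k → ∃ s ∈ S, s ∉ C i ∧ T.dist v s ≤ T.dist v b) :
    CoversWithin T S p := by
  have mem_of_forall_notMem : ∀ b ∈ B, (∀ k, b ∉ C k) → b ∈ S :=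
    fun b hb hout => hS ((mem_symmetrize_of_forall_notMem hout).mpr hb)
  have mem_of_mem : ∀ b ∈ B, b ∈ C j → b ∈ S :=
    fun b hb hbj => hS ((h.mem_symmetrize hbj).mpr (by rwa [mirror_self]))
  intro u
  by_cases hu : ∃ i, u ∈ C i
  · obtain ⟨i, hui⟩ := hu
    refine h.exists_dist_le_of_mem hT hB hS (fun i b hb hbj => ?_) hui
    by_cases hout : ∀ k, b ∉ C k
    · exact ⟨b, mem_of_forall_notMem b hb hout, hout i, le_rfl⟩
    obtain ⟨k, hbk⟩ := not_forall_not.mp hout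
    exact hfar i k (by rintro rfl; exact hbj hbk) b hb hbk
  simp only [not_exists] at hu
  obtain ⟨b, hb, hbu⟩ := hB u
  by_cases hbS : b ∈ S
  · exact ⟨b, hbS, hbu⟩
  obtain ⟨k, hbk⟩ : ∃ k, b ∈ C k := by
    by_contra! hout
    exact hbS (mem_of_forall_notMem b hb hout)
  obtain ⟨s, hs, -, hsb⟩ := hfar j k (by rintro rfl; exact hbS (mem_of_mem b hb hbk)) b hb hbk
  refine ⟨s, hs, ?_⟩
  calc T.dist s u ≤ T.dist s v + T.dist v u := hT.connected.dist_triangle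
    _ ≤ T.dist v b + T.dist v u := by rw [SimpleGraph.dist_comm]; omega
    _ = T.dist b u := ((h.isBranch k).dist_eq hT.connected hbk (hu k)).symm
    _ ≤ p := hbu

lemma coversWithin_insert_symmetrize (hT : T.IsTree) (h : IsBranchSymmetry T v C i0 τ)
    {B : Finset V} {p : ℕ} (hB : CoversWithin T B p) (j : ι) :
    CoversWithin T ((insert v (symmetrize C τ B j) : Finset V) : Set V) p :=
  h.coversWithin_of_symmetrize_subset hT hB (subset_insert _ _) fun i _ _ _ _ _ =>
    ⟨v, mem_insert_self _ _, (h.isBranch i).center_notMem, by simp⟩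

lemma coversWithin_symmetrize_of_nearest (hT : T.IsTree) (h : IsBranchSymmetry T v C i0 τ)
    {B : Finset V} {p : ℕ} (hB : CoversWithin T B p) {j : ι}
    (hj : ∀ k, ∀ b ∈ B, b ∈ C k → ∃ c ∈ B, c ∈ C j ∧ T.dist v c ≤ T.dist v b) :
    CoversWithin T (symmetrize C τ B j) p := by
  refine h.coversWithin_of_symmetrize_subset hT hB subset_rfl fun i k hkj b hb hbk => ?_
  obtain ⟨c, hc, hcj, hcb⟩ := hj k b hb hbk
  -- The stand-in is the mirror image of `c` in a branch other than `C i`; `C j` or `C k` is one.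
  obtain ⟨l, hli⟩ : ∃ l, l ≠ i := if hji : j = i then ⟨k, hji ▸ hkj⟩ else ⟨j, hji⟩
  have hcl := h.mirror_mem l hcj
  refine ⟨mirror τ j l c, (h.mem_symmetrize hcl).mpr (by rwa [mirror_mirror]),
    fun hi => hli (h.eq_of_mem hcl hi), by rwa [h.dist_center_mirror]⟩

lemma exists_isPSDOptimal_symmetrize [Fintype ι] {w : V → ℕ} (hT : T.IsTree)
    (h : IsBranchSymmetry T v C i0 τ) (hw : ∀ i, ∀ x ∈ C i0, w (τ i x) = w x) (hv : w v ≤ 1)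
    {B : Finset V} (hB : IsPSDOptimal T w B) :
    ∃ S : Finset V, IsPSDOptimal T w S ∧ ∀ i, ↑S ∩ C i = τ i '' (↑S ∩ C i0) := by
  have : Nonempty ι := ⟨i0⟩
  have hcov := coversWithin_psdPt hT hB.1
  let W : ι → ℕ := fun k => ∑ x ∈ B with x ∈ C k, w x
  have hBw : ∑ x ∈ B, w x = ∑ x ∈ B with ∀ k, x ∉ C k, w x + ∑ k, W k :=
    sum_eq_sum_filter_add_sum_branches h.pairwise_disjoint B w
  have hSw : ∀ j, ∑ x ∈ symmetrize C τ B j, w x =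
      ∑ x ∈ B with ∀ k, x ∉ C k, w x + Fintype.card ι * W j := h.sum_symmetrize hw B
  have hvC : ∀ k, v ∉ C k := fun k => (h.isBranch k).center_notMem
  obtain ⟨j, -, hj⟩ := exists_min_image univ W univ_nonempty
  by_cases hbal : v ∉ B ∧ ∀ k, W k = W j
  · obtain ⟨j', hj'⟩ := exists_branch_nearest_center T v C B
    refine ⟨symmetrize C τ B j',
      hB.of_coversWithin hT (h.coversWithin_symmetrize_of_nearest hT hcov hj') ?_,
      h.symmetrize_inter B j'⟩
    rw [hSw, hBw, sum_congr rfl fun k _ => hbal.2 k, hbal.2 j']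
    simp
  refine ⟨insert v (symmetrize C τ B j),
    hB.of_coversWithin hT (h.coversWithin_insert_symmetrize hT hcov j) ?_, fun i => ?_⟩
  · have hsum : Fintype.card ι * W j ≤ ∑ k, W k := by
      simpa using sum_le_sum fun k (_ : k ∈ univ) => hj k (mem_univ k)
    by_cases hvB : v ∈ B
    · rw [insert_eq_of_mem ((mem_symmetrize_of_forall_notMem hvC).mpr hvB), hSw, hBw]
      omega
    obtain ⟨k, hk⟩ : ∃ k, W k ≠ W j := by
      by_contra! hall
      exact hbal ⟨hvB, hall⟩
    have hlt : Fintype.card ι * W j < ∑ k, W k := by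
      simpa using sum_lt_sum (fun k (_ : k ∈ univ) => hj k (mem_univ k))
        ⟨k, mem_univ k, lt_of_le_of_ne (hj k (mem_univ k)) hk.symm⟩
    rw [sum_insert (mt (mem_symmetrize_of_forall_notMem hvC).mp hvB), hSw, hBw]
    omega
  · rw [coe_insert, Set.insert_inter_of_notMem (hvC i), Set.insert_inter_of_notMem (hvC i0)]
    exact h.symmetrize_inter B j i

end IsBranchSymmetry

end BranchSymmetry

section SymmetryMaps

variable {V ι : Type*} [DecidableEq ι] {T : SimpleGraph V} {w : V → ℕ} {v : V}
  {C : ι → Set V} {i0 : ι} {σ : ι → T ≃g T}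

lemma isBranchSymmetry_update (hbranch : ∀ i, IsBranch T v (C i)) (hinj : Function.Injective C)
    (hσ : ∀ i, i ≠ i0 → IsSymmetryMap T w (C i0) (C i) (σ i)) :
    IsBranchSymmetry T v C i0 (Function.update σ i0 (RelIso.refl _)) where
  isBranch := hbranch
  pairwise_disjoint i j hij := (hbranch i).disjoint (hbranch j) (hinj.ne hij)
  apply_base x := by simp
  apply_center i := by
    rcases eq_or_ne i i0 with rfl | hi
    · simp
    rw [Function.update_of_ne hi]
    exact (hσ i hi).1 v fun hv => hv.elim (hbranch i0).center_notMem (hbranch i).center_notMem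
  image_base i := by
    rcases eq_or_ne i i0 with rfl | hi
    · simp
    rw [Function.update_of_ne hi]
    exact (hσ i hi).2.1

lemma weight_update_apply (hσ : ∀ i, i ≠ i0 → IsSymmetryMap T w (C i0) (C i) (σ i)) (i : ι) :
    ∀ x ∈ C i0, w (Function.update σ i0 (RelIso.refl _) i x) = w x := by
  rcases eq_or_ne i i0 with rfl | hi
  · simp
  rw [Function.update_of_ne hi]
  exact (hσ i hi).2.2.2

end SymmetryMaps

theorem stmt3_general {V : Type*} [Fintype V] (T : SimpleGraph V) (hT : T.IsTree)
    (w : V → ℕ) (v : V) (hv : w v = 1)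
    (m : ℕ) (hm : 0 < m) (C : Fin m → Set V)
    (hbranch : ∀ i, IsBranch T v (C i)) (hinj : Function.Injective C)
    (σ : Fin m → (T ≃g T))
    (hσ : ∀ i, i ≠ ⟨0, hm⟩ → IsSymmetryMap T w (C ⟨0, hm⟩) (C i) (σ i)) :
    ∃ B : Finset V, IsPSDForcing T ↑B ∧
      (∑ x ∈ B, w x) + psdPt T ↑B = psdThW T w ∧
      ∀ i, i ≠ ⟨0, hm⟩ → ↑B ∩ C i = ⇑(σ i) '' (↑B ∩ C ⟨0, hm⟩) := by
  obtain ⟨B₀, hB₀⟩ := exists_isPSDOptimal T w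
  obtain ⟨B, hB, hBsymm⟩ := (isBranchSymmetry_update hbranch hinj hσ).exists_isPSDOptimal_symmetrize
    hT (weight_update_apply hσ) hv.le hB₀
  refine ⟨B, hB.1, hB.2, fun i hi => ?_⟩
  rw [hBsymm i, Function.update_of_ne hi]

/-- If `(T,w)` is a positive-integer weighted finite tree, `v ∈ V(T)` has `w(v) = 1`, and
`C 0, …, C (m-1)` are pairwise symmetric branches of `T` at `v` with symmetry maps `σ i`
carrying `C 0` onto `C i`, then there is an optimal set `B` for `(T,w)` that is symmetric:
`B ∩ C i = σ i '' (B ∩ C 0)` for every `i ≠ 0`. -/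
theorem stmt3 {V : Type*} [Fintype V] [DecidableEq V] (T : SimpleGraph V) (hT : T.IsTree)
    (w : V → ℕ) (hw : ∀ x, 0 < w x) (v : V) (hv : w v = 1)
    (m : ℕ) (hm : 0 < m) (C : Fin m → Set V)
    (hbranch : ∀ i, IsBranch T v (C i)) (hinj : Function.Injective C)
    (σ : Fin m → (T ≃g T))
    (hσ : ∀ i, i ≠ ⟨0, hm⟩ → IsSymmetryMap T w (C ⟨0, hm⟩) (C i) (σ i)) :
    ∃ B : Finset V, IsPSDForcing T ↑B ∧
      (∑ x ∈ B, w x) + psdPt T ↑B = psdThW T w ∧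
      ∀ i, i ≠ ⟨0, hm⟩ → ↑B ∩ C i = ⇑(σ i) '' (↑B ∩ C ⟨0, hm⟩) :=
  stmt3_general T hT w v hv m hm C hbranch hinj σ hσ
end

section
/- Every balanced spider T_{α,β} with α ≥ 3 legs each of order β ≥ 1 (all vertices unweighted, i.e., weight 1) has an optimal set containing the center vertex: there exists a PSD-forcing set B with c ∈ B and |B| + pt₊(T_{α,β};B) = th₊(T_{α,β}). -/
open SimpleGraph

namespace SpiderProof

variable {α β : ℕ}

abbrev Vt (α β : ℕ) := Option ((_ : Fin α) × Fin β)

/-- nat distance, omega friendly -/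
def nd (a b : ℕ) : ℕ := (a - b) + (b - a)

lemma some_eq_iff {i i' : Fin α} {j j' : Fin β} :
    (some ⟨i, j⟩ : Vt α β) = some ⟨i', j'⟩ ↔ i = i' ∧ (j : ℕ) = (j' : ℕ) := by
  constructor
  · intro h
    obtain ⟨rfl, hj⟩ := Sigma.mk.inj_iff.mp (Option.some.inj h)
    exact ⟨rfl, by rw [eq_of_heq hj]⟩
  · rintro ⟨rfl, hj⟩
    have : j = j' := Fin.ext hj
    rw [this]

lemma adj_none_some {i : Fin α} {j : Fin β} :
    (balancedSpider α β).Adj none (some ⟨i, j⟩) ↔ (j : ℕ) = 0 := by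
  show (SimpleGraph.fromRel _).Adj _ _ ↔ _
  rw [SimpleGraph.fromRel_adj]
  constructor
  · rintro ⟨-, h | h⟩
    · rcases h with (⟨i', j', hj, -, hsome⟩ | ⟨i', j', j'', h, hx, -⟩)
      · rw [some_eq_iff] at hsome
        omega
      · exact absurd hx (by simp)
    · rcases h with (⟨i', j', hj, hx, -⟩ | ⟨i', j', j'', h, -, hx⟩) <;> exact absurd hx (by simp)
  · intro hj
    refine ⟨by simp, Or.inl (Or.inl ⟨i, j, hj, rfl, rfl⟩)⟩

lemma adj_some_some {i i' : Fin α} {j j' : Fin β} :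
    (balancedSpider α β).Adj (some ⟨i, j⟩) (some ⟨i', j'⟩) ↔
      i = i' ∧ ((j' : ℕ) = j + 1 ∨ (j : ℕ) = j' + 1) := by
  show (SimpleGraph.fromRel _).Adj _ _ ↔ _
  rw [SimpleGraph.fromRel_adj]
  constructor
  · rintro ⟨-, h | h⟩
    · rcases h with (⟨i₁, j₁, hj, hx, -⟩ | ⟨i₁, j₁, j₂, h, hx, hy⟩)
      · exact absurd hx (by simp)
      · rw [some_eq_iff] at hx hy
        exact ⟨hx.1.trans hy.1.symm, Or.inl (by omega)⟩
    · rcases h with (⟨i₁, j₁, hj, hx, -⟩ | ⟨i₁, j₁, j₂, h, hy, hx⟩)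
      · exact absurd hx (by simp)
      · rw [some_eq_iff] at hx hy
        exact ⟨hx.1.trans hy.1.symm, Or.inr (by omega)⟩
  · rintro ⟨rfl, h | h⟩
    · refine ⟨?_, Or.inl (Or.inr ⟨i, j, j', h, rfl, rfl⟩)⟩
      intro hc; rw [some_eq_iff] at hc; omega
    · refine ⟨?_, Or.inr (Or.inr ⟨i, j', j, h, rfl, rfl⟩)⟩
      intro hc; rw [some_eq_iff] at hc; omega

lemma adj_some_none {i : Fin α} {j : Fin β} :
    (balancedSpider α β).Adj (some ⟨i, j⟩) none ↔ (j : ℕ) = 0 := by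
  rw [SimpleGraph.adj_comm]; exact adj_none_some

lemma not_adj_none_none : ¬ (balancedSpider α β).Adj none none := SimpleGraph.irrefl _

/-- distance function on the spider -/
def dv : Vt α β → Vt α β → ℕ
  | none, none => 0
  | none, some ⟨_, p⟩ => (p : ℕ) + 1
  | some ⟨_, p⟩, none => (p : ℕ) + 1
  | some ⟨i, p⟩, some ⟨j, q⟩ => if i = j then nd p q else (p : ℕ) + q + 2

@[simp] lemma dv_none_none : dv (none : Vt α β) none = 0 := rfl
@[simp] lemma dv_none_some {i : Fin α} {p : Fin β} : dv none (some ⟨i, p⟩) = (p : ℕ) + 1 := rfl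
@[simp] lemma dv_some_none {i : Fin α} {p : Fin β} : dv (some ⟨i, p⟩) none = (p : ℕ) + 1 := rfl
lemma dv_ss_same {i : Fin α} {p q : Fin β} :
    dv (some ⟨i, p⟩) (some ⟨i, q⟩) = nd p q := by
  simp [dv]
lemma dv_ss_ne {i j : Fin α} (hij : i ≠ j) {p q : Fin β} :
    dv (some ⟨i, p⟩) (some ⟨j, q⟩) = (p : ℕ) + q + 2 := by
  simp [dv, hij]

@[simp] lemma dv_self (x : Vt α β) : dv x x = 0 := by
  match x with
  | none => rfl
  | some ⟨i, p⟩ => rw [dv_ss_same]; simp [nd]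

lemma eq_of_dv_eq_zero {b x : Vt α β} (h : dv b x = 0) : b = x := by
  match b, x with
  | none, none => rfl
  | none, some ⟨i, p⟩ => simp at h
  | some ⟨i, p⟩, none => simp at h
  | some ⟨i, p⟩, some ⟨j, q⟩ =>
    by_cases hij : i = j
    · subst hij; rw [dv_ss_same, nd] at h
      rw [some_eq_iff]
      omega
    · rw [dv_ss_ne hij] at h; omega

lemma dv_adj_le {b v x : Vt α β} (h : (balancedSpider α β).Adj v x) :
    dv b x ≤ dv b v + 1 := by
  match v, x with
  | none, none => exact absurd h not_adj_none_none
  | none, some ⟨i, j⟩ =>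
    rw [adj_none_some] at h
    match b with
    | none => simp [h]
    | some ⟨i', q⟩ =>
      by_cases hij : i' = i
      · subst hij; rw [dv_ss_same]; simp [nd]; omega
      · rw [dv_ss_ne hij]; simp; omega
  | some ⟨i, j⟩, none =>
    rw [adj_some_none] at h
    match b with
    | none => simp [h]
    | some ⟨i', q⟩ =>
      by_cases hij : i' = i
      · subst hij; rw [dv_ss_same]; simp [nd]; omega
      · rw [dv_ss_ne hij]; simp; omega
  | some ⟨i, j⟩, some ⟨i₂, j₂⟩ =>
    rw [adj_some_some] at h
    obtain ⟨rfl, hj⟩ := h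
    match b with
    | none => simp; omega
    | some ⟨i', q⟩ =>
      by_cases hij : i' = i
      · subst hij; rw [dv_ss_same, dv_ss_same, nd, nd]; omega
      · rw [dv_ss_ne hij, dv_ss_ne hij]; omega

lemma dv_closer {b x : Vt α β} (h : 0 < dv b x) :
    ∃ y, (balancedSpider α β).Adj y x ∧ dv b y + 1 ≤ dv b x := by
  match b, x with
  | none, none => simp at h
  | none, some ⟨i, p⟩ =>
    by_cases hp : (p : ℕ) = 0
    · exact ⟨none, by rw [adj_none_some]; exact hp, by simp⟩
    · have hplt : (p : ℕ) - 1 < β := by have := p.2; omega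
      refine ⟨some ⟨i, ⟨(p : ℕ) - 1, hplt⟩⟩, ?_, ?_⟩
      · rw [adj_some_some]
        refine ⟨rfl, Or.inl ?_⟩
        show (p : ℕ) = (p : ℕ) - 1 + 1
        omega
      · rw [dv_none_some, dv_none_some]
        show (p : ℕ) - 1 + 1 + 1 ≤ (p : ℕ) + 1
        omega
  | some ⟨i, q⟩, none =>
    have h0 : (0 : ℕ) < β := lt_of_le_of_lt (Nat.zero_le _) q.2
    refine ⟨some ⟨i, ⟨0, h0⟩⟩, ?_, ?_⟩
    · rw [adj_some_none]
    · rw [dv_ss_same, dv_some_none, nd]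
      show (q : ℕ) - 0 + (0 - (q : ℕ)) + 1 ≤ (q : ℕ) + 1
      omega
  | some ⟨i, q⟩, some ⟨j, p⟩ =>
    by_cases hij : i = j
    · subst hij
      rw [dv_ss_same, nd] at h ⊢
      rcases Nat.lt_or_ge (p : ℕ) (q : ℕ) with hpq | hpq
      · have hlt : (p : ℕ) + 1 < β := by have := q.2; omega
        refine ⟨some ⟨i, ⟨(p : ℕ) + 1, hlt⟩⟩, ?_, ?_⟩
        · rw [adj_some_some]
          exact ⟨rfl, Or.inr rfl⟩
        · rw [dv_ss_same, nd]
          show (q:ℕ) - ((p:ℕ)+1) + ((p:ℕ)+1 - (q:ℕ)) + 1 ≤ (q:ℕ) - (p:ℕ) + ((p:ℕ) - (q:ℕ))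
          omega
      · have hqp : (q : ℕ) < (p : ℕ) := by omega
        have hlt : (p : ℕ) - 1 < β := by have := p.2; omega
        refine ⟨some ⟨i, ⟨(p : ℕ) - 1, hlt⟩⟩, ?_, ?_⟩
        · rw [adj_some_some]
          refine ⟨rfl, Or.inl ?_⟩
          show (p : ℕ) = (p : ℕ) - 1 + 1
          omega
        · rw [dv_ss_same, nd]
          show (q:ℕ) - ((p:ℕ)-1) + ((p:ℕ)-1 - (q:ℕ)) + 1 ≤ (q:ℕ) - (p:ℕ) + ((p:ℕ) - (q:ℕ))
          omega
    · by_cases hp : (p : ℕ) = 0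
      · refine ⟨none, by rw [adj_none_some]; exact hp, ?_⟩
        rw [dv_some_none, dv_ss_ne hij]
        omega
      · have hplt : (p : ℕ) - 1 < β := by have := p.2; omega
        refine ⟨some ⟨j, ⟨(p : ℕ) - 1, hplt⟩⟩, ?_, ?_⟩
        · rw [adj_some_some]
          refine ⟨rfl, Or.inl ?_⟩
          show (p : ℕ) = (p : ℕ) - 1 + 1
          omega
        · rw [dv_ss_ne hij, dv_ss_ne hij]
          show (q:ℕ) + ((p:ℕ) - 1) + 2 + 1 ≤ (q:ℕ) + (p:ℕ) + 2
          omega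

/-! ### inversion lemmas -/

lemma adj_none_inv {x : Vt α β} (h : (balancedSpider α β).Adj none x) :
    ∃ (i : Fin α) (j : Fin β), x = some ⟨i, j⟩ ∧ (j : ℕ) = 0 := by
  match x with
  | none => exact absurd h not_adj_none_none
  | some ⟨i, j⟩ => exact ⟨i, j, rfl, adj_none_some.mp h⟩

lemma adj_some_inv {i : Fin α} {p : Fin β} {x : Vt α β}
    (h : (balancedSpider α β).Adj (some ⟨i, p⟩) x) :
    (x = none ∧ (p : ℕ) = 0) ∨
      ∃ q : Fin β, x = some ⟨i, q⟩ ∧ ((q : ℕ) = p + 1 ∨ (p : ℕ) = q + 1) := by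
  match x with
  | none => exact Or.inl ⟨rfl, adj_some_none.mp h⟩
  | some ⟨i', q⟩ =>
    obtain ⟨rfl, hq⟩ := adj_some_some.mp h
    exact Or.inr ⟨q, rfl, hq⟩

/-! ### tags for the separation argument -/

def tagN : Vt α β → ℕ
  | none => 0
  | some ⟨i, _⟩ => (i : ℕ) + 1

def tagC (i : Fin α) (p : Fin β) : Vt α β → ℕ
  | none => 0
  | some ⟨i', q⟩ => if i' = i ∧ (p : ℕ) < (q : ℕ) then 1 else 0

lemma reach_eq {W : Type*} {H : SimpleGraph W} (f : W → ℕ)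
    (hf : ∀ a b, H.Adj a b → f a = f b) {x y : W} (h : H.Reachable x y) :
    f x = f y := by
  obtain ⟨pw⟩ := h
  induction pw with
  | nil => rfl
  | cons hadj _ ih => exact (hf _ _ hadj).trans ih

lemma spider_forces {C : Set (Vt α β)} {v w : Vt α β} (hv : v ∈ C)
    (hadj : (balancedSpider α β).Adj v w) (hw : w ∉ C) :
    psdForces (balancedSpider α β) C v w := by
  classical
  refine ⟨hv, hadj, hw, ?_⟩
  intro u hu hadj' hreach
  match v, hv, hadj, hadj' with
  | none, hv, hadj, hadj' =>
    have htag : tagN (α := α) (β := β) u = tagN w := by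
      refine reach_eq (fun z => tagN z.1) ?_ hreach
      rintro ⟨a, ha⟩ ⟨b, hb⟩ hab
      have hab' : (balancedSpider α β).Adj a b := hab
      match a, b with
      | none, _ => exact absurd hv ha
      | _, none => exact absurd hv hb
      | some ⟨i₁, q₁⟩, some ⟨i₂, q₂⟩ =>
        obtain ⟨rfl, -⟩ := adj_some_some.mp hab'
        rfl
    obtain ⟨iu, ju, rfl, hju⟩ := adj_none_inv hadj'
    obtain ⟨iw, jw, rfl, hjw⟩ := adj_none_inv hadj
    have : (iu : ℕ) + 1 = (iw : ℕ) + 1 := htag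
    rw [some_eq_iff]
    exact ⟨Fin.ext (by omega), by omega⟩
  | some ⟨i, p⟩, hv, hadj, hadj' =>
    have htag : tagC i p u = tagC i p w := by
      refine reach_eq (fun z => tagC i p z.1) ?_ hreach
      rintro ⟨a, ha⟩ ⟨b, hb⟩ hab
      have hab' : (balancedSpider α β).Adj a b := hab
      match a, b with
      | none, none => exact absurd hab' not_adj_none_none
      | none, some ⟨i₂, q₂⟩ =>
        have hq₂ := adj_none_some.mp hab'
        show (0 : ℕ) = if i₂ = i ∧ (p : ℕ) < (q₂ : ℕ) then 1 else 0
        rw [if_neg]; rintro ⟨-, hlt⟩; omega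
      | some ⟨i₂, q₂⟩, none =>
        have hq₂ := adj_some_none.mp hab'
        show (if i₂ = i ∧ (p : ℕ) < (q₂ : ℕ) then 1 else 0) = (0 : ℕ)
        rw [if_neg]; rintro ⟨-, hlt⟩; omega
      | some ⟨i₁, q₁⟩, some ⟨i₂, q₂⟩ =>
        obtain ⟨rfl, hq⟩ := adj_some_some.mp hab'
        show (if i₁ = i ∧ (p : ℕ) < (q₁ : ℕ) then 1 else 0)
            = if i₁ = i ∧ (p : ℕ) < (q₂ : ℕ) then 1 else 0
        by_cases hii : i₁ = i
        · subst hii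
          have hne₁ : ¬ (q₁ : ℕ) = (p : ℕ) := by
            intro hc
            exact ha (by simpa [Set.mem_setOf_eq, not_not] using
              (some_eq_iff.mpr ⟨rfl, hc⟩ ▸ hv))
          have hne₂ : ¬ (q₂ : ℕ) = (p : ℕ) := by
            intro hc
            exact hb (by simpa [Set.mem_setOf_eq, not_not] using
              (some_eq_iff.mpr ⟨rfl, hc⟩ ▸ hv))
          by_cases h1 : (p : ℕ) < (q₁ : ℕ) <;> by_cases h2 : (p : ℕ) < (q₂ : ℕ) <;>
            simp [h1, h2] <;> omega
        · simp [hii]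
    rcases adj_some_inv hadj' with ⟨rfl, hp0⟩ | ⟨qu, rfl, hqu⟩ <;>
      rcases adj_some_inv hadj with ⟨rfl, hp0'⟩ | ⟨qw, rfl, hqw⟩
    · rfl
    · exfalso
      have : (0 : ℕ) = if i = i ∧ (p : ℕ) < (qw : ℕ) then 1 else 0 := htag
      rcases hqw with hqw | hqw
      · rw [if_pos ⟨rfl, by omega⟩] at this; omega
      · omega
    · exfalso
      have : (if i = i ∧ (p : ℕ) < (qu : ℕ) then 1 else 0) = (0 : ℕ) := htag
      rcases hqu with hqu | hqu
      · rw [if_pos ⟨rfl, by omega⟩] at this; omega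
      · omega
    · have : (if i = i ∧ (p : ℕ) < (qu : ℕ) then 1 else 0)
          = if i = i ∧ (p : ℕ) < (qw : ℕ) then 1 else 0 := htag
      rw [some_eq_iff]
      refine ⟨rfl, ?_⟩
      rcases hqu with hqu | hqu <;> rcases hqw with hqw | hqw
      · omega
      · rw [if_pos ⟨rfl, by omega⟩, if_neg (by rintro ⟨-, h⟩; omega)] at this; omega
      · rw [if_neg (by rintro ⟨-, h⟩; omega), if_pos ⟨rfl, by omega⟩] at this; omega
      · omega

/-! ### step characterization -/

lemma psdStep_eq (C : Set (Vt α β)) :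
    psdStep (balancedSpider α β) C
      = C ∪ {w | ∃ v ∈ C, (balancedSpider α β).Adj v w} := by
  classical
  ext x
  constructor
  · rintro (hx | ⟨v, hv, hadj, -⟩)
    · exact Or.inl hx
    · exact Or.inr ⟨v, hv, hadj⟩
  · rintro (hx | ⟨v, hv, hadj⟩)
    · exact Or.inl hx
    · by_cases hxC : x ∈ C
      · exact Or.inl hxC
      · exact Or.inr ⟨v, spider_forces hv hadj hxC⟩

lemma subset_psdStep (C : Set (Vt α β)) : C ⊆ psdStep (balancedSpider α β) C :=
  Set.subset_union_left

lemma iterate_mono_succ (C : Set (Vt α β)) (t : ℕ) :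
    (psdStep (balancedSpider α β))^[t] C ⊆ (psdStep (balancedSpider α β))^[t + 1] C := by
  rw [Function.iterate_succ_apply']
  exact subset_psdStep _

lemma iterate_subset_ball (C : Set (Vt α β)) (t : ℕ) :
    (psdStep (balancedSpider α β))^[t] C ⊆ {x | ∃ b ∈ C, dv b x ≤ t} := by
  induction t with
  | zero => exact fun x hx => ⟨x, hx, by simp⟩
  | succ t ih =>
    rw [Function.iterate_succ_apply', psdStep_eq]
    rintro x (hx | ⟨v, hv, hadj⟩)
    · obtain ⟨b, hb, hdb⟩ := ih hx
      exact ⟨b, hb, hdb.trans (Nat.le_succ t)⟩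
    · obtain ⟨b, hb, hdb⟩ := ih hv
      exact ⟨b, hb, (dv_adj_le hadj).trans (by omega)⟩

lemma ball_subset_iterate (C : Set (Vt α β)) (t : ℕ) {b x : Vt α β}
    (hb : b ∈ C) (hd : dv b x ≤ t) : x ∈ (psdStep (balancedSpider α β))^[t] C := by
  induction t generalizing x with
  | zero =>
    have : b = x := eq_of_dv_eq_zero (Nat.le_zero.mp hd)
    exact this ▸ hb
  | succ t ih =>
    rcases Nat.lt_or_ge t (dv b x) with hlt | hle
    · have hpos : 0 < dv b x := by omega
      obtain ⟨y, hyx, hdy⟩ := dv_closer hpos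
      have hy : y ∈ (psdStep (balancedSpider α β))^[t] C := ih (by omega)
      rw [Function.iterate_succ_apply', psdStep_eq]
      exact Or.inr ⟨y, hy, hyx⟩
    · exact iterate_mono_succ C t (ih hle)

/-! ### propagation time vs coverage -/

lemma forcing_of_cover {C : Set (Vt α β)} {t : ℕ}
    (h : ∀ x : Vt α β, ∃ b ∈ C, dv b x ≤ t) :
    (psdStep (balancedSpider α β))^[t] C = Set.univ := by
  apply Set.eq_univ_of_forall
  intro x
  obtain ⟨b, hb, hd⟩ := h x
  exact ball_subset_iterate C t hb hd

lemma psdPt_le_of_cover {C : Set (Vt α β)} {t : ℕ}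
    (h : ∀ x : Vt α β, ∃ b ∈ C, dv b x ≤ t) :
    psdPt (balancedSpider α β) C ≤ t :=
  Nat.sInf_le (forcing_of_cover h)

lemma cover_of_forcing {C : Set (Vt α β)} (h : IsPSDForcing (balancedSpider α β) C) :
    ∀ x : Vt α β, ∃ b ∈ C, dv b x ≤ psdPt (balancedSpider α β) C := by
  intro x
  have hmem : (psdStep (balancedSpider α β))^[psdPt (balancedSpider α β) C] C = Set.univ :=
    Nat.sInf_mem h
  exact iterate_subset_ball C _ (hmem ▸ (Set.mem_univ x))

/-! ### the center construction -/

def gg (β ρ : ℕ) : ℕ := (β + ρ) / (2 * ρ + 1)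

def Bc (α β ρ : ℕ) (hβ : 1 ≤ β) : Finset (Vt α β) :=
  insert none ((Finset.univ ×ˢ Finset.range (gg β ρ)).image
    (fun it : Fin α × ℕ => some ⟨it.1, ⟨min (2 * ρ + it.2 * (2 * ρ + 1)) (β - 1), by omega⟩⟩))

lemma none_mem_Bc {ρ : ℕ} (hβ : 1 ≤ β) : none ∈ Bc α β ρ hβ :=
  Finset.mem_insert_self _ _

lemma Bc_card {ρ : ℕ} (hβ : 1 ≤ β) : (Bc α β ρ hβ).card ≤ 1 + α * gg β ρ := by
  classical
  refine (Finset.card_insert_le _ _).trans ?_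
  have h1 := Finset.card_image_le (s := (Finset.univ : Finset (Fin α)) ×ˢ Finset.range (gg β ρ))
    (f := fun it : Fin α × ℕ =>
      (some ⟨it.1, ⟨min (2 * ρ + it.2 * (2 * ρ + 1)) (β - 1), by omega⟩⟩ : Vt α β))
  have h2 : ((Finset.univ : Finset (Fin α)) ×ˢ Finset.range (gg β ρ)).card = α * gg β ρ := by
    rw [Finset.card_product, Finset.card_range, Finset.card_univ, Fintype.card_fin]
  omega

lemma Bc_cover {ρ : ℕ} (hβ : 1 ≤ β) :
    ∀ x : Vt α β, ∃ b ∈ Bc α β ρ hβ, dv b x ≤ ρ := by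
  classical
  intro x
  match x with
  | none => exact ⟨none, none_mem_Bc hβ, by simp⟩
  | some ⟨i, p⟩ =>
    by_cases hp : (p : ℕ) + 1 ≤ ρ
    · exact ⟨none, none_mem_Bc hβ, by simpa using hp⟩
    · have hρp : ρ ≤ (p : ℕ) := by omega
      have hpβ : (p : ℕ) < β := p.2
      have hdm := Nat.div_add_mod ((p : ℕ) - ρ) (2 * ρ + 1)
      have hmlt : ((p : ℕ) - ρ) % (2 * ρ + 1) < 2 * ρ + 1 := Nat.mod_lt _ (by omega)
      set t := ((p : ℕ) - ρ) / (2 * ρ + 1) with ht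
      set r := ((p : ℕ) - ρ) % (2 * ρ + 1) with hr
      -- hdm : (2ρ+1) * t + r = p - ρ
      obtain ⟨T, hT⟩ : ∃ T, (2 * ρ + 1) * t = T := ⟨_, rfl⟩
      rw [hT] at hdm
      have htlt : t < gg β ρ := by
        have h1 : t + 1 ≤ (β + ρ) / (2 * ρ + 1) := by
          rw [Nat.le_div_iff_mul_le (by omega : 0 < 2 * ρ + 1)]
          have h2 : (t + 1) * (2 * ρ + 1) = (2 * ρ + 1) * t + (2 * ρ + 1) := by ring
          rw [h2, hT]
          omega
        rw [gg]
        omega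
      refine ⟨some ⟨i, ⟨min (2 * ρ + t * (2 * ρ + 1)) (β - 1), by omega⟩⟩, ?_, ?_⟩
      · refine Finset.mem_insert_of_mem (Finset.mem_image.mpr ⟨(i, t), ?_, rfl⟩)
        rw [Finset.mem_product]
        exact ⟨Finset.mem_univ _, Finset.mem_range.mpr htlt⟩
      · rw [dv_ss_same, nd]
        have hmul : t * (2 * ρ + 1) = T := by rw [← hT]; ring
        show min (2 * ρ + t * (2 * ρ + 1)) (β - 1) - (p : ℕ)
            + ((p : ℕ) - min (2 * ρ + t * (2 * ρ + 1)) (β - 1)) ≤ ρ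
        rw [hmul]
        omega

/-! ### counting lower bounds -/

lemma interval_cover {S : Finset ℕ} {a b d : ℕ}
    (h : ∀ p, a ≤ p → p ≤ b → ∃ q ∈ S, nd p q ≤ d) :
    b + 1 ≤ a + S.card * (2 * d + 1) := by
  classical
  rcases Nat.lt_or_ge b a with hba | hab
  · omega
  have h' : ∀ p : ℕ, ∃ q, a ≤ p → p ≤ b → q ∈ S ∧ nd p q ≤ d := by
    intro p
    by_cases hp : a ≤ p ∧ p ≤ b
    · obtain ⟨q, hq, hqd⟩ := h p hp.1 hp.2
      exact ⟨q, fun _ _ => ⟨hq, hqd⟩⟩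
    · exact ⟨0, fun h1 h2 => absurd ⟨h1, h2⟩ hp⟩
  choose f hf using h'
  have hmaps : ∀ p ∈ Finset.Icc a b, f p ∈ S := by
    intro p hp
    rw [Finset.mem_Icc] at hp
    exact (hf p hp.1 hp.2).1
  have hfib : ∀ q ∈ S, ((Finset.Icc a b).filter (fun p => f p = q)).card ≤ 2 * d + 1 := by
    intro q hq
    have hsub : ((Finset.Icc a b).filter (fun p => f p = q)) ⊆ Finset.Icc (q - d) (q + d) := by
      intro p hp
      rw [Finset.mem_filter, Finset.mem_Icc] at hp
      obtain ⟨⟨hp1, hp2⟩, hfp⟩ := hp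
      have := (hf p hp1 hp2).2
      rw [hfp, nd] at this
      rw [Finset.mem_Icc]
      omega
    refine (Finset.card_le_card hsub).trans ?_
    rw [Nat.card_Icc]
    omega
  have hcard := Finset.card_le_mul_card_image_of_maps_to hmaps (2 * d + 1) hfib
  rw [Nat.card_Icc] at hcard
  calc b + 1 = a + (b + 1 - a) := by omega
    _ ≤ a + (2 * d + 1) * S.card := Nat.add_le_add_left hcard a
    _ = a + S.card * (2 * d + 1) := by rw [Nat.mul_comm]

def Sleg (B : Finset (Vt α β)) (i : Fin α) : Finset ℕ :=
  ((Finset.univ : Finset (Fin β)).filter (fun q => some ⟨i, q⟩ ∈ B)).image Fin.val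

lemma mem_Sleg {B : Finset (Vt α β)} {i : Fin α} {q : Fin β} (h : some ⟨i, q⟩ ∈ B) :
    (q : ℕ) ∈ Sleg B i := by
  classical
  exact Finset.mem_image.mpr ⟨q, Finset.mem_filter.mpr ⟨Finset.mem_univ _, h⟩, rfl⟩

lemma sum_Sleg_le (B : Finset (Vt α β)) : ∑ i : Fin α, (Sleg B i).card ≤ B.card := by
  classical
  set T := (Finset.univ : Finset ((_ : Fin α) × Fin β)).filter (fun σ => some σ ∈ B) with hT
  have hcardT : T.card = ∑ i : Fin α, (Sleg B i).card := by
    have h1 : T = (Finset.univ : Finset (Fin α)).sigma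
        (fun i => (Finset.univ : Finset (Fin β)).filter (fun q => some ⟨i, q⟩ ∈ B)) := by
      ext ⟨i, q⟩
      simp [hT, Finset.mem_sigma]
    rw [h1, Finset.card_sigma]
    congr 1
    ext i
    rw [Sleg, Finset.card_image_of_injective _ Fin.val_injective]
  have himg : T.image some ⊆ B := by
    intro x hx
    rw [Finset.mem_image] at hx
    obtain ⟨σ, hσ, rfl⟩ := hx
    exact (Finset.mem_filter.mp hσ).2
  have : T.card ≤ B.card := by
    rw [← Finset.card_image_of_injective T (Option.some_injective _)]
    exact Finset.card_le_card himg
  omega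

lemma Sleg_cover {B : Finset (Vt α β)} (hnone : none ∉ B) {d : ℕ}
    (hcov : ∀ x : Vt α β, ∃ b ∈ (B : Set (Vt α β)), dv b x ≤ d) (i : Fin α) :
    ∀ p : ℕ, d ≤ p + 1 → p < β → ∃ q ∈ Sleg B i, nd p q ≤ d := by
  intro p hdp hpβ
  obtain ⟨b, hb, hbd⟩ := hcov (some ⟨i, ⟨p, hpβ⟩⟩)
  rw [Finset.mem_coe] at hb
  match b with
  | none => exact absurd hb hnone
  | some ⟨i', q⟩ =>
    by_cases hii : i' = i
    · subst hii
      rw [dv_ss_same] at hbd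
      have hbd' : (q : ℕ) - p + (p - (q : ℕ)) ≤ d := hbd
      refine ⟨(q : ℕ), mem_Sleg hb, ?_⟩
      show p - (q : ℕ) + ((q : ℕ) - p) ≤ d
      omega
    · rw [dv_ss_ne hii] at hbd
      have hbd' : (q : ℕ) + p + 2 ≤ d := hbd
      exfalso
      omega

/-! ### arithmetic -/

lemma gg_le {β ρ c : ℕ} (h : β + ρ ≤ (2 * ρ + 1) * c + 2 * ρ) : gg β ρ ≤ c := by
  have h2 : 2 * ρ + 1 - 1 = 2 * ρ := by omega
  rw [gg, Nat.div_le_iff_le_mul_add_pred (by omega : 0 < 2 * ρ + 1), h2]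
  exact h

lemma arith {α β d k : ℕ} (hα : 3 ≤ α) (hd : 1 ≤ d) (hdβ : d + 1 ≤ β)
    (M : Fin α → ℕ)
    (hM : ∀ i, β ≤ d - 1 + M i * (2 * d + 1))
    (i0 : Fin α) (L H : ℕ) (hLH : L + H ≤ M i0) (hL : 1 ≤ L)
    (hH : β ≤ 2 * d + H * (2 * d + 1))
    (hk : ∑ i : Fin α, M i ≤ k) :
    ∃ ρ, 1 + α * gg β ρ + ρ ≤ k + d := by
  classical
  have hdm := Nat.div_add_mod (β - d - 1) (2 * d + 1)
  have hrlt : (β - d - 1) % (2 * d + 1) < 2 * d + 1 := Nat.mod_lt _ (by omega)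
  set q := (β - d - 1) / (2 * d + 1) with hqdef
  set r := (β - d - 1) % (2 * d + 1) with hrdef
  obtain ⟨P, hP⟩ : ∃ P, (2 * d + 1) * q = P := ⟨_, rfl⟩
  rw [hP] at hdm
  have hβP : β = d + 1 + P + r := by omega
  have F1 : ∀ i, q + 1 ≤ M i := by
    intro i
    by_contra hcon
    push_neg at hcon
    have h1 : M i * (2 * d + 1) ≤ q * (2 * d + 1) := Nat.mul_le_mul_right _ (by omega)
    have h2 : q * (2 * d + 1) = P := by rw [← hP]; ring
    have h3 := hM i
    obtain ⟨X, hX⟩ : ∃ X, M i * (2 * d + 1) = X := ⟨_, rfl⟩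
    rw [hX] at h1 h3
    omega
  have S1 : α * (q + 1) ≤ k := by
    have h1 : ∑ _i : Fin α, (q + 1) ≤ ∑ i : Fin α, M i :=
      Finset.sum_le_sum (fun i _ => F1 i)
    rw [Finset.sum_const, Finset.card_univ, Fintype.card_fin, smul_eq_mul] at h1
    exact h1.trans hk
  rcases Nat.lt_or_ge r d with hrd | hrd
  · -- r ≤ d - 1
    by_cases hq0 : q = 0
    · have hP0 : P = 0 := by rw [← hP, hq0, Nat.mul_zero]
      have hS : α ≤ k := by
        have h := S1
        rw [hq0] at h
        simpa using h
      by_cases hd1 : d = 1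
      · refine ⟨β, ?_⟩
        have hgg0 : gg β β = 0 := Nat.div_eq_of_lt (by omega)
        rw [hgg0, Nat.mul_zero]
        omega
      · obtain ⟨ρ, rfl⟩ : ∃ ρ, d = ρ + 1 := ⟨d - 1, by omega⟩
        refine ⟨ρ, ?_⟩
        have hgg1 : gg β ρ ≤ 1 := gg_le (by omega)
        have hAG : α * gg β ρ ≤ α * 1 := Nat.mul_le_mul (Nat.le_refl α) hgg1
        rw [Nat.mul_one] at hAG
        obtain ⟨AG, hAGe⟩ : ∃ x, α * gg β ρ = x := ⟨_, rfl⟩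
        rw [hAGe] at hAG ⊢
        omega
    · -- q ≥ 1
      by_cases hdq : 2 * q + 2 ≤ d
      · obtain ⟨ρ, rfl⟩ : ∃ ρ, d = ρ + 1 := ⟨d - 1, by omega⟩
        refine ⟨ρ, ?_⟩
        have hgg : gg β ρ ≤ q + 1 := gg_le (by
          have hexp : (2 * ρ + 1) * (q + 1) + 2 * q = P + 2 * ρ + 1 := by
            rw [← hP]; ring
          obtain ⟨Y, hY⟩ : ∃ Y, (2 * ρ + 1) * (q + 1) = Y := ⟨_, rfl⟩
          rw [hY] at hexp ⊢
          omega)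
        have hAG : α * gg β ρ ≤ α * (q + 1) := Nat.mul_le_mul (Nat.le_refl α) hgg
        obtain ⟨AG, hAGe⟩ : ∃ x, α * gg β ρ = x := ⟨_, rfl⟩
        obtain ⟨AC, hACe⟩ : ∃ x, α * (q + 1) = x := ⟨_, rfl⟩
        rw [hAGe, hACe] at hAG
        rw [hACe] at S1
        rw [hAGe]
        omega
      · refine ⟨d + 1, ?_⟩
        have hgg : gg β (d + 1) ≤ q := gg_le (by
          have hexp : (2 * (d + 1) + 1) * q = P + 2 * q := by rw [← hP]; ring
          rw [hexp]
          omega)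
        have hAG : α * gg β (d + 1) ≤ α * q := Nat.mul_le_mul (Nat.le_refl α) hgg
        have hAC : α * (q + 1) = α * q + α := by ring
        obtain ⟨AG, hAGe⟩ : ∃ x, α * gg β (d + 1) = x := ⟨_, rfl⟩
        obtain ⟨AQ, hAQe⟩ : ∃ x, α * q = x := ⟨_, rfl⟩
        rw [hAGe, hAQe] at hAG
        rw [hAQe] at hAC
        rw [hAC] at S1
        rw [hAGe]
        omega
  · -- d ≤ r : use ρ = d
    have F3 : q + 1 ≤ H := by
      by_contra hcon
      push_neg at hcon
      have h1 : H * (2 * d + 1) ≤ q * (2 * d + 1) := Nat.mul_le_mul_right _ (by omega)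
      have h2 : q * (2 * d + 1) = P := by rw [← hP]; ring
      obtain ⟨X, hX⟩ : ∃ X, H * (2 * d + 1) = X := ⟨_, rfl⟩
      rw [hX] at h1 hH
      omega
    have hMi0 : q + 2 ≤ M i0 := by omega
    obtain ⟨a', rfl⟩ : ∃ a', α = a' + 1 := ⟨α - 1, by omega⟩
    have S3 : (a' + 1) * (q + 1) + 1 ≤ k := by
      have hsum := Finset.sum_erase_add Finset.univ M (Finset.mem_univ i0)
      have h1 : ∑ _i ∈ Finset.univ.erase i0, (q + 1)
          ≤ ∑ i ∈ Finset.univ.erase i0, M i :=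
        Finset.sum_le_sum (fun i _ => F1 i)
      rw [Finset.sum_const, Finset.card_erase_of_mem (Finset.mem_univ i0),
        Finset.card_univ, Fintype.card_fin, smul_eq_mul] at h1
      have hcard : a' + 1 - 1 = a' := by omega
      rw [hcard] at h1
      have hexp : (a' + 1) * (q + 1) = a' * (q + 1) + (q + 1) := by ring
      obtain ⟨A1, hA1⟩ : ∃ x, a' * (q + 1) = x := ⟨_, rfl⟩
      rw [hA1] at h1 hexp
      obtain ⟨SE, hSE⟩ : ∃ x, ∑ i ∈ Finset.univ.erase i0, M i = x := ⟨_, rfl⟩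
      obtain ⟨ST, hST⟩ : ∃ x, ∑ i, M i = x := ⟨_, rfl⟩
      rw [hSE] at h1 hsum
      rw [hST] at hsum hk
      rw [hexp]
      omega
    refine ⟨d, ?_⟩
    have hgg : gg β d ≤ q + 1 := gg_le (by
      have hexp : (2 * d + 1) * (q + 1) = P + (2 * d + 1) := by rw [← hP]; ring
      rw [hexp]
      omega)
    have hAG : (a' + 1) * gg β d ≤ (a' + 1) * (q + 1) := Nat.mul_le_mul (Nat.le_refl _) hgg
    obtain ⟨AG, hAGe⟩ : ∃ x, (a' + 1) * gg β d = x := ⟨_, rfl⟩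
    obtain ⟨AC, hACe⟩ : ∃ x, (a' + 1) * (q + 1) = x := ⟨_, rfl⟩
    rw [hAGe, hACe] at hAG
    rw [hACe] at S3
    rw [hAGe]
    omega
end SpiderProof

open SpiderProof in
/-- Every balanced spider with `α ≥ 3` legs each of order `β ≥ 1` has an optimal set
containing the center vertex. -/
theorem stmt6 (α β : ℕ) (hα : 3 ≤ α) (hβ : 1 ≤ β) :
    ∃ B : Finset (Option ((_ : Fin α) × Fin β)),
      IsPSDForcing (balancedSpider α β) ↑B ∧ none ∈ B ∧
      B.card + psdPt (balancedSpider α β) ↑B = psdTh (balancedSpider α β) := by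
  classical
  have huniv : IsPSDForcing (balancedSpider α β)
      ((Finset.univ : Finset (Vt α β)) : Set (Vt α β)) := by
    refine ⟨0, ?_⟩
    simp
  have hne : {k | ∃ B : Finset (Vt α β), IsPSDForcing (balancedSpider α β) ↑B ∧
      k = B.card + psdPt (balancedSpider α β) ↑B}.Nonempty :=
    ⟨_, Finset.univ, huniv, rfl⟩
  obtain ⟨B₀, hB₀f, hB₀v⟩ := Nat.sInf_mem hne
  by_cases hc : none ∈ B₀
  · exact ⟨B₀, hB₀f, hc, hB₀v.symm⟩
  · have hcov := cover_of_forcing hB₀f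
    set d := psdPt (balancedSpider α β) (↑B₀ : Set (Vt α β)) with hddef
    obtain ⟨b0, hb0, hb0d⟩ := hcov none
    have hb0ne : b0 ≠ none := by
      rintro rfl
      exact hc (Finset.mem_coe.mp hb0)
    obtain ⟨i0, q0, rfl⟩ : ∃ i0 q0, b0 = some ⟨i0, q0⟩ := by
      match b0, hb0ne with
      | some ⟨i, p⟩, _ => exact ⟨i, p, rfl⟩
      | none, h => exact absurd rfl h
    have hq0d : (q0 : ℕ) + 1 ≤ d := by simpa using hb0d
    have hd1 : 1 ≤ d := by omega
    have hk1 : 1 ≤ B₀.card := Finset.card_pos.mpr ⟨_, Finset.mem_coe.mp hb0⟩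
    obtain ⟨ρ, hρ⟩ : ∃ ρ, 1 + α * gg β ρ + ρ ≤ B₀.card + d := by
      rcases Nat.lt_or_ge β (d + 1) with hbd | hbd
      · refine ⟨β, ?_⟩
        have hgg0 : gg β β = 0 := Nat.div_eq_of_lt (by omega)
        rw [hgg0, Nat.mul_zero]
        omega
      · -- d + 1 ≤ β : counting
        have hMle : ∀ i, β ≤ d - 1 + (Sleg B₀ i).card * (2 * d + 1) := by
          intro i
          have hcover : ∀ p, d - 1 ≤ p → p ≤ β - 1 → ∃ q ∈ Sleg B₀ i, nd p q ≤ d := by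
            intro p h1 h2
            exact Sleg_cover hc hcov i p (by omega) (by omega)
          have h3 := interval_cover hcover
          omega
        have hLH : ((Sleg B₀ i0).filter (fun q => q < d)).card
            + ((Sleg B₀ i0).filter (fun q => ¬ q < d)).card ≤ (Sleg B₀ i0).card := by
          rw [Finset.card_filter_add_card_filter_not]
        have hL : 1 ≤ ((Sleg B₀ i0).filter (fun q => q < d)).card := by
          refine Finset.card_pos.mpr ⟨(q0 : ℕ), ?_⟩
          rw [Finset.mem_filter]
          exact ⟨mem_Sleg (Finset.mem_coe.mp hb0), by omega⟩
        have hH : β ≤ 2 * d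
            + ((Sleg B₀ i0).filter (fun q => ¬ q < d)).card * (2 * d + 1) := by
          have hcover : ∀ p, 2 * d ≤ p → p ≤ β - 1 →
              ∃ q ∈ (Sleg B₀ i0).filter (fun q => ¬ q < d), nd p q ≤ d := by
            intro p h1 h2
            obtain ⟨q, hq, hqd⟩ := Sleg_cover hc hcov i0 p (by omega) (by omega)
            have hqd' : p - q + (q - p) ≤ d := by rw [nd] at hqd; exact hqd
            refine ⟨q, Finset.mem_filter.mpr ⟨hq, by omega⟩, hqd⟩
          have h3 := interval_cover hcover
          omega
        exact arith hα hd1 hbd _ hMle i0 _ _ hLH hL hH (sum_Sleg_le B₀)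
    have hBcf : IsPSDForcing (balancedSpider α β) (↑(Bc α β ρ hβ) : Set (Vt α β)) := by
      refine ⟨ρ, forcing_of_cover ?_⟩
      intro x
      obtain ⟨b, hb, hbd⟩ := Bc_cover hβ x
      exact ⟨b, Finset.mem_coe.mpr hb, hbd⟩
    have hptle : psdPt (balancedSpider α β) (↑(Bc α β ρ hβ) : Set (Vt α β)) ≤ ρ := by
      refine psdPt_le_of_cover ?_
      intro x
      obtain ⟨b, hb, hbd⟩ := Bc_cover hβ x
      exact ⟨b, Finset.mem_coe.mpr hb, hbd⟩
    have hcard := Bc_card (α := α) (ρ := ρ) hβ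
    have hv2 : psdTh (balancedSpider α β) ≤ (Bc α β ρ hβ).card
        + psdPt (balancedSpider α β) (↑(Bc α β ρ hβ) : Set (Vt α β)) :=
      Nat.sInf_le ⟨Bc α β ρ hβ, hBcf, rfl⟩
    refine ⟨Bc α β ρ hβ, hBcf, none_mem_Bc hβ, ?_⟩
    have hth : psdTh (balancedSpider α β)
        = B₀.card + psdPt (balancedSpider α β) (↑B₀ : Set (Vt α β)) := hB₀v
    obtain ⟨AGG, hAGG⟩ : ∃ x, α * gg β ρ = x := ⟨_, rfl⟩
    rw [hAGG] at hρ hcard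
    omega
end

section
/- Let α, β, s be real numbers with α ≥ 3, β ≥ 1, and s ≥ 1. Then h(α,β,s) ≤ g(α,β,s) or h(α,β,s−1) ≤ g(α,β,s). -/
/-- `g(α,β,s) = αs + (β + 1 - s)/(2s)`, the throttling value when `s` vertices are chosen
from each leg of a balanced spider and the center is not chosen. -/
noncomputable def gF (α β s : ℝ) : ℝ := α * s + (β + 1 - s) / (2 * s)

/-- `h(α,β,s) = 1 + αs + (β - s)/(2s + 1)`, the throttling value when `s` vertices are chosen
from each leg of a balanced spider together with the center. -/
noncomputable def hF (α β s : ℝ) : ℝ := 1 + α * s + (β - s) / (2 * s + 1)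

/-!
Everything is governed by `β + 1 - s`: the difference `g(s) - h(s)` has the sign of
`(β + 1 - s) - 4s²`, while `g(s) - h(s - 1) = (α - 1) - (β + 1 - s) / (2s(2s - 1))`.
If the first is negative, then `β + 1 - s < 4s² ≤ 2 · 2s(2s - 1) ≤ (α - 1) · 2s(2s - 1)`
for `s ≥ 1` and `α ≥ 3`, so the second is nonnegative.
-/

theorem gF_sub_hF (α β : ℝ) {s : ℝ} (hs : 0 < s) :
    gF α β s - hF α β s = ((β + 1 - s) - 4 * s ^ 2) / (2 * s * (2 * s + 1)) := by
  unfold gF hF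
  field_simp
  ring

theorem gF_sub_hF_sub_one (α β : ℝ) {s : ℝ} (hs : 1 / 2 < s) :
    gF α β s - hF α β (s - 1) = (α - 1) - (β + 1 - s) / (2 * s * (2 * s - 1)) := by
  have hs0 : s ≠ 0 := by linarith
  have h2s : s * 2 - 1 ≠ 0 := by linarith
  unfold gF hF
  rw [show 2 * (s - 1) + 1 = 2 * s - 1 by ring]
  field_simp
  ring

theorem hF_le_gF {α β s : ℝ} (hs : 0 < s) (h : 4 * s ^ 2 ≤ β + 1 - s) :
    hF α β s ≤ gF α β s := by
  rw [← sub_nonneg, gF_sub_hF α β hs]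
  exact div_nonneg (by linarith) (by positivity)

theorem hF_sub_one_le_gF {α β s : ℝ} (hs : 1 / 2 < s)
    (h : β + 1 - s ≤ (α - 1) * (2 * s * (2 * s - 1))) :
    hF α β (s - 1) ≤ gF α β s := by
  have hpos : 0 < 2 * s * (2 * s - 1) := mul_pos (by linarith) (by linarith)
  rw [← sub_nonneg, gF_sub_hF_sub_one α β hs, sub_nonneg, div_le_iff₀ hpos]
  exact h

theorem stmt7_general (α β s : ℝ) (hα : 3 ≤ α) (hs : 1 ≤ s) :
    hF α β s ≤ gF α β s ∨ hF α β (s - 1) ≤ gF α β s := by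
  rcases le_total (4 * s ^ 2) (β + 1 - s) with hlarge | hsmall
  · exact Or.inl (hF_le_gF (by linarith) hlarge)
  · refine Or.inr (hF_sub_one_le_gF (by linarith) ?_)
    have hquad : 4 * s ^ 2 ≤ 2 * (2 * s * (2 * s - 1)) := by nlinarith
    have hcoef : 2 * (2 * s * (2 * s - 1)) ≤ (α - 1) * (2 * s * (2 * s - 1)) :=
      mul_le_mul_of_nonneg_right (by linarith) (by nlinarith)
    linarith

/-- For real `α ≥ 3`, `β ≥ 1`, `s ≥ 1`: `h(α,β,s) ≤ g(α,β,s)` or `h(α,β,s-1) ≤ g(α,β,s)`. -/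
theorem stmt7 (α β s : ℝ) (hα : 3 ≤ α) (hβ : 1 ≤ β) (hs : 1 ≤ s) :
    hF α β s ≤ gF α β s ∨ hF α β (s - 1) ≤ gF α β s :=
  stmt7_general α β s hα hs
end
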